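/- arXiv:2506.15800 — 8 statements merged into one kernel-verified Lean document; each statement's English description precedes it below -/
import Mathlib

section
/- For every n ≥ 1, the number of permutations of {1,...,n} avoiding both the pattern 321 and the pattern 4123 equals the Fibonacci number F_{2n-1}. -/
/-- `σ` avoids the pattern 321: no indices `i < j < k` with `σ i > σ j > σ k`. -/
def Avoids321 {n : ℕ} (σ : Equiv.Perm (Fin n)) : Prop :=
  ¬ ∃ i j k : Fin n, i < j ∧ j < k ∧ σ k < σ j ∧ σ j < σ i

/-- `σ` avoids the pattern 4123: no indices `i < j < k < l` with
`σ j < σ k < σ l < σ i`. -/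
def Avoids4123 {n : ℕ} (σ : Equiv.Perm (Fin n)) : Prop :=
  ¬ ∃ i j k l : Fin n, i < j ∧ j < k ∧ k < l ∧ σ j < σ k ∧ σ k < σ l ∧ σ l < σ i

/-!
Write `σ` as its first value `p` followed by a word order-isomorphic to a permutation `τ`.
An occurrence of 321 or 4123 through the first entry is an inversion, resp. an increasing
triple, of `τ` with all values below `p`. The values `0, 1, 2` of `τ` always form one of these,
so `p ≤ 2`; the choices `p = 0, 1` impose nothing more, and `p = 2` forces `0` before `1` in `τ`.
Hence, with `a n` (`numAvoiding`) the number of avoiders of size `n` and `b m`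
(`numAvoidingZeroBeforeOne`) the number of those of size `m + 2` having `0` before `1`,
`a (m + 3) = 2 a (m + 2) + b m` and `b (m + 1) = a (m + 2) + b m`,
which `a (m + 2) = F (2m + 3)`, `b m = F (2m + 2)` satisfy.
-/

open Equiv Fin

namespace Equiv.Perm

variable {m : ℕ}

/-- The permutation with one-line notation `p, p.succAbove (τ 0), p.succAbove (τ 1), …`. -/
def finCons (p : Fin (m + 1)) (τ : Perm (Fin m)) : Perm (Fin (m + 1)) :=
  (finSuccEquiv m).trans ((optionCongr τ).trans (finSuccEquiv' p).symm)

@[simp] lemma finCons_zero (p : Fin (m + 1)) (τ : Perm (Fin m)) : finCons p τ 0 = p := by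
  simp [finCons]

@[simp] lemma finCons_succ (p : Fin (m + 1)) (τ : Perm (Fin m)) (i : Fin m) :
    finCons p τ i.succ = p.succAbove (τ i) := by
  simp [finCons]

@[simp] lemma finCons_inv_apply_self (p : Fin (m + 1)) (τ : Perm (Fin m)) :
    (finCons p τ)⁻¹ p = 0 := by
  rw [inv_eq_iff_eq, finCons_zero]

@[simp] lemma finCons_inv_apply_succAbove (p : Fin (m + 1)) (τ : Perm (Fin m)) (v : Fin m) :
    (finCons p τ)⁻¹ (p.succAbove v) = (τ⁻¹ v).succ := by
  rw [inv_eq_iff_eq, finCons_succ, ← Perm.mul_apply, mul_inv_cancel, Perm.one_apply]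

lemma finCons_injective2 : Function.Injective2 (finCons (m := m)) := by
  intro p q τ ρ h
  have hp : p = q := by simpa using DFunLike.congr_fun h 0
  subst hp
  refine ⟨rfl, Equiv.ext fun i => succAbove_right_injective (p := p) ?_⟩
  simpa using DFunLike.congr_fun h i.succ

lemma finCons_uncurry_bijective : Function.Bijective (Function.uncurry (finCons (m := m))) := by
  rw [Fintype.bijective_iff_injective_and_card]
  refine ⟨fun x y h => Prod.ext_iff.2 (finCons_injective2 h), ?_⟩
  simp [Fintype.card_perm, Nat.factorial_succ]

lemma card_subtype_eq_sum_finCons (Q : Perm (Fin (m + 1)) → Prop) :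
    Nat.card {σ // Q σ} = ∑ p, Nat.card {τ : Perm (Fin m) // Q (finCons p τ)} := by
  calc Nat.card {σ // Q σ} = Nat.card (Σ p, {τ : Perm (Fin m) // Q (finCons p τ)}) :=
        Nat.card_congr <| ((Equiv.ofBijective _ finCons_uncurry_bijective).subtypeEquiv
          fun _ => Iff.rfl).symm.trans (subtypeProdEquivSigmaSubtype fun p τ => Q (finCons p τ))
    _ = _ := Nat.card_sigma

lemma card_subtype_eq_sum_finCons_lt_three (Q : Perm (Fin (m + 3)) → Prop)
    (hQ : ∀ (p : Fin (m + 3)) τ, 3 ≤ (p : ℕ) → ¬ Q (finCons p τ)) :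
    Nat.card {σ // Q σ} = Nat.card {τ // Q (finCons 0 τ)} + Nat.card {τ // Q (finCons 1 τ)} +
      Nat.card {τ // Q (finCons 2 τ)} := by
  rw [card_subtype_eq_sum_finCons, Fin.sum_univ_succ, Fin.sum_univ_succ, Fin.sum_univ_succ,
    Finset.sum_eq_zero fun i _ => Nat.card_eq_zero.2 (.inl ⟨fun τ => hQ _ τ.1 (by simp) τ.2⟩)]
  simp [add_assoc]

lemma exists_inversion_or_increasing_triple_le (τ : Perm (Fin m)) {a b c : Fin m}
    (hab : a < b) (hbc : b < c) :
    (∃ j k, j < k ∧ τ k < τ j ∧ τ j ≤ c) ∨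
      ∃ j k l, j < k ∧ k < l ∧ τ j < τ k ∧ τ k < τ l ∧ τ l ≤ c := by
  rcases lt_or_gt_of_ne (τ⁻¹.injective.ne hab.ne) with hpos_ab | hpos_ba
  · rcases lt_or_gt_of_ne (τ⁻¹.injective.ne hbc.ne) with hpos_bc | hpos_cb
    · exact .inr ⟨τ⁻¹ a, τ⁻¹ b, τ⁻¹ c, hpos_ab, hpos_bc, by simpa using hab, by simpa using hbc,
        by simp⟩
    · exact .inl ⟨τ⁻¹ c, τ⁻¹ b, hpos_cb, by simpa using hbc, by simp⟩
  · exact .inl ⟨τ⁻¹ b, τ⁻¹ a, hpos_ba, by simpa using hab, by simpa using hbc.le⟩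

lemma avoids321_finCons_iff (p : Fin (m + 1)) (τ : Perm (Fin m)) :
    Avoids321 (finCons p τ) ↔
      Avoids321 τ ∧ ¬ ∃ j k, j < k ∧ τ k < τ j ∧ (τ j).castSucc < p := by
  simp only [Avoids321, exists_fin_succ, ← not_or, finCons_zero, finCons_succ,
    succAbove_lt_succAbove_iff, succAbove_lt_iff_castSucc_lt, succ_lt_succ_iff, Fin.not_lt_zero,
    succ_pos, true_and, false_and, and_false, exists_false, false_or]
  rw [or_comm]

lemma avoids4123_finCons_iff (p : Fin (m + 1)) (τ : Perm (Fin m)) :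
    Avoids4123 (finCons p τ) ↔ Avoids4123 τ ∧
      ¬ ∃ j k l, j < k ∧ k < l ∧ τ j < τ k ∧ τ k < τ l ∧ (τ l).castSucc < p := by
  simp only [Avoids4123, exists_fin_succ, ← not_or, finCons_zero, finCons_succ,
    succAbove_lt_succAbove_iff, succAbove_lt_iff_castSucc_lt, succ_lt_succ_iff, Fin.not_lt_zero,
    succ_pos, true_and, false_and, and_false, exists_false, false_or]
  rw [or_comm]

end Equiv.Perm

open Perm

def Avoids321And4123 {n : ℕ} (σ : Perm (Fin n)) : Prop := Avoids321 σ ∧ Avoids4123 σ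

instance {n : ℕ} : DecidablePred (Avoids321And4123 (n := n)) := fun _ => by
  unfold Avoids321And4123 Avoids321 Avoids4123; infer_instance

section finCons

variable {m : ℕ}

lemma avoids321And4123_finCons_iff (p : Fin (m + 1)) (τ : Perm (Fin m)) :
    Avoids321And4123 (finCons p τ) ↔ Avoids321And4123 τ ∧
      (¬ ∃ j k, j < k ∧ τ k < τ j ∧ (τ j).castSucc < p) ∧
      ¬ ∃ j k l, j < k ∧ k < l ∧ τ j < τ k ∧ τ k < τ l ∧ (τ l).castSucc < p := by
  rw [Avoids321And4123, Avoids321And4123, avoids321_finCons_iff, avoids4123_finCons_iff]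
  tauto

lemma avoids321And4123_finCons_zero (τ : Perm (Fin m)) :
    Avoids321And4123 (finCons 0 τ) ↔ Avoids321And4123 τ := by
  simp [avoids321And4123_finCons_iff]

lemma avoids321And4123_finCons_one (τ : Perm (Fin (m + 1))) :
    Avoids321And4123 (finCons 1 τ) ↔ Avoids321And4123 τ := by
  simp only [avoids321And4123_finCons_iff, Fin.lt_def, val_castSucc, val_one, and_iff_left_iff_imp]
  refine fun _ => ⟨?_, ?_⟩ <;> omega

lemma avoids321And4123_finCons_two (τ : Perm (Fin (m + 2))) :
    Avoids321And4123 (finCons 2 τ) ↔ Avoids321And4123 τ ∧ τ⁻¹ 0 < τ⁻¹ 1 := by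
  rw [avoids321And4123_finCons_iff]
  refine and_congr_right fun _ => ⟨fun ⟨hinv, _⟩ => ?_, fun h => ⟨?_, ?_⟩⟩
  · have h01 : (0 : Fin (m + 2)) ≠ 1 := by simp
    refine (lt_or_gt_of_ne (τ⁻¹.injective.ne h01)).resolve_right fun h10 => ?_
    exact hinv ⟨τ⁻¹ 1, τ⁻¹ 0, h10, by simp, by simp [Fin.lt_def, Nat.mod_eq_of_lt]⟩
  · rintro ⟨j, k, hjk, hkj, hj⟩
    rw [Fin.lt_def] at hkj
    rw [Fin.lt_def, val_castSucc, val_two] at hj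
    have hj1 : τ j = 1 := by ext; rw [val_one]; omega
    have hk0 : τ k = 0 := by ext; rw [val_zero]; omega
    rw [← hj1, ← hk0] at h
    simp only [coe_inv, symm_apply_apply] at h
    exact h.asymm hjk
  · rintro ⟨j, k, l, -, -, hjk, hkl, hl⟩
    simp only [Fin.lt_def, val_castSucc, val_two] at hjk hkl hl
    omega

lemma not_avoids321And4123_finCons_of_three_le {p : Fin (m + 1)} (hp : 3 ≤ (p : ℕ))
    (τ : Perm (Fin m)) : ¬ Avoids321And4123 (finCons p τ) := by
  have hm : 3 ≤ m := by omega
  rw [avoids321And4123_finCons_iff]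
  rintro ⟨-, hinv, hinc⟩
  rcases exists_inversion_or_increasing_triple_le τ (a := ⟨0, by omega⟩) (b := ⟨1, by omega⟩)
    (c := ⟨2, by omega⟩) (by simp [Fin.lt_def]) (by simp [Fin.lt_def]) with
    ⟨j, k, hjk, hkj, hj⟩ | ⟨j, k, l, hjk, hkl, hjk', hkl', hl⟩
  · exact hinv ⟨j, k, hjk, hkj, by simp [Fin.le_def, Fin.lt_def] at hj ⊢; omega⟩
  · exact hinc ⟨j, k, l, hjk, hkl, hjk', hkl', by simp [Fin.le_def, Fin.lt_def] at hl ⊢; omega⟩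

end finCons

noncomputable def numAvoiding (n : ℕ) : ℕ :=
  Nat.card {σ : Perm (Fin n) // Avoids321And4123 σ}

noncomputable def numAvoidingZeroBeforeOne (n : ℕ) : ℕ :=
  Nat.card {σ : Perm (Fin (n + 2)) // Avoids321And4123 σ ∧ σ⁻¹ 0 < σ⁻¹ 1}

lemma numAvoiding_add_three (m : ℕ) :
    numAvoiding (m + 3) = 2 * numAvoiding (m + 2) + numAvoidingZeroBeforeOne m := by
  rw [numAvoiding, card_subtype_eq_sum_finCons_lt_three _
    fun p τ hp => not_avoids321And4123_finCons_of_three_le hp τ]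
  simp only [avoids321And4123_finCons_zero, avoids321And4123_finCons_one,
    avoids321And4123_finCons_two]
  rw [two_mul]
  rfl

lemma numAvoidingZeroBeforeOne_succ (m : ℕ) :
    numAvoidingZeroBeforeOne (m + 1) = numAvoiding (m + 2) + numAvoidingZeroBeforeOne m := by
  have h0 (τ : Perm (Fin (m + 2))) : (finCons 0 τ)⁻¹ 0 < (finCons 0 τ)⁻¹ 1 := by
    rw [← succ_zero_eq_one, ← succAbove_zero_apply, finCons_inv_apply_self,
      finCons_inv_apply_succAbove]
    exact succ_pos _
  have h1 (τ : Perm (Fin (m + 2))) : ¬ (finCons 1 τ)⁻¹ 0 < (finCons 1 τ)⁻¹ 1 := by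
    rw [finCons_inv_apply_self]
    exact Fin.not_lt_zero _
  have h2 (τ : Perm (Fin (m + 2))) :
      (finCons 2 τ)⁻¹ 0 < (finCons 2 τ)⁻¹ 1 ↔ τ⁻¹ 0 < τ⁻¹ 1 := by
    have e0 : (0 : Fin (m + 3)) = (2 : Fin (m + 3)).succAbove 0 := by
      rw [succAbove_of_castSucc_lt _ _ (by simp [Fin.lt_def, Nat.mod_eq_of_lt])]; rfl
    have e1 : (1 : Fin (m + 3)) = (2 : Fin (m + 3)).succAbove 1 := by
      rw [succAbove_of_castSucc_lt _ _ (by simp [Fin.lt_def, Nat.mod_eq_of_lt])]; rfl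
    rw [e0, e1, finCons_inv_apply_succAbove, finCons_inv_apply_succAbove, succ_lt_succ_iff]
  rw [numAvoidingZeroBeforeOne, card_subtype_eq_sum_finCons_lt_three _
    fun p τ hp h => not_avoids321And4123_finCons_of_three_le hp τ h.1]
  simp only [avoids321And4123_finCons_zero, avoids321And4123_finCons_one,
    avoids321And4123_finCons_two, h0, h1, h2, and_true, and_false, and_assoc, and_self,
    Nat.card_of_isEmpty, add_zero]
  rfl

lemma numAvoiding_one : numAvoiding 1 = 1 := by
  rw [numAvoiding, Nat.card_eq_fintype_card]; decide

lemma numAvoiding_two : numAvoiding 2 = 2 := by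
  rw [numAvoiding, Nat.card_eq_fintype_card]; decide

lemma numAvoidingZeroBeforeOne_zero : numAvoidingZeroBeforeOne 0 = 1 := by
  rw [numAvoidingZeroBeforeOne, Nat.card_eq_fintype_card]; decide

lemma numAvoiding_add_two_and_numAvoidingZeroBeforeOne (m : ℕ) :
    numAvoiding (m + 2) = Nat.fib (2 * m + 3) ∧
      numAvoidingZeroBeforeOne m = Nat.fib (2 * m + 2) := by
  induction m with
  | zero => exact ⟨numAvoiding_two, numAvoidingZeroBeforeOne_zero⟩
  | succ m ih =>
    have fib_even : Nat.fib (2 * m + 4) = Nat.fib (2 * m + 2) + Nat.fib (2 * m + 3) :=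
      Nat.fib_add_two
    have fib_odd : Nat.fib (2 * m + 5) = Nat.fib (2 * m + 3) + Nat.fib (2 * m + 4) :=
      Nat.fib_add_two
    rw [numAvoiding_add_three, numAvoidingZeroBeforeOne_succ, ih.1, ih.2,
      show 2 * (m + 1) + 3 = 2 * m + 5 by ring, show 2 * (m + 1) + 2 = 2 * m + 4 by ring]
    omega

theorem stmt_1 (n : ℕ) (hn : 1 ≤ n) :
    Nat.card {σ : Equiv.Perm (Fin n) // Avoids321 σ ∧ Avoids4123 σ} =
      Nat.fib (2 * n - 1) := by
  obtain _ | _ | m := n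
  · omega
  · exact numAvoiding_one
  · rw [show 2 * (m + 2) - 1 = 2 * m + 3 by omega]
    exact (numAvoiding_add_two_and_numAvoidingZeroBeforeOne m).1
end

section
/- For 1 ≤ k < n, the number of permutations σ of {1,...,n} avoiding 321 and 4123 with σ(k) = 1 equals k times the number of permutations of {1,...,n-k} avoiding 321 and 4123. -/
open Equiv Finset

namespace Fin

lemma add_sub_le_of_strictMonoOn {n : ℕ} {f : Fin n → ℕ} {p q : Fin n}
    (hf : StrictMonoOn f (Set.Iic q)) (hpq : p ≤ q) : f p + (q.val - p.val) ≤ f q := by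
  obtain ⟨d, hd⟩ : ∃ d, q.val = p.val + d := ⟨q.val - p.val, by rw [Fin.le_def] at hpq; omega⟩
  induction d generalizing q with
  | zero => rw [show q = p from Fin.ext (by omega)]; omega
  | succ d ih =>
    let r : Fin n := ⟨p.val + d, by omega⟩
    have hrq : r < q := Fin.lt_def.2 (by simp [r]; omega)
    have hr := ih (hf.mono (Set.Iic_subset_Iic.2 hrq.le)) (Fin.le_def.2 (by simp [r])) rfl
    have := hf hrq.le Set.self_mem_Iic hrq
    simp only [r, add_tsub_cancel_left] at hr this
    omega

lemma exists_natAdd_eq {k m : ℕ} {p : Fin (k + m)} (hp : k ≤ p.val) :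
    ∃ t : Fin m, natAdd k t = p :=
  ⟨⟨p.val - k, by omega⟩, Fin.ext (by simp; omega)⟩

end Fin

namespace Equiv.Perm

variable {n : ℕ} (σ : Perm (Fin n))

lemma card_le_of_forall_val_apply_le {s : Finset (Fin n)} {c : ℕ}
    (h : ∀ p ∈ s, (σ p).val ≤ c) : #s ≤ c + 1 := by
  simpa using card_le_card_of_injOn (fun p => (σ p).val) (t := range (c + 1))
    (fun p hp => mem_range.2 (Nat.lt_succ_of_le (h p hp)))
    (fun p _ q _ hpq => σ.injective (Fin.ext hpq))

lemma exists_notMem_val_apply_le {s : Finset (Fin n)} {c : ℕ} (hc : c < n) (hs : #s ≤ c) :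
    ∃ p ∉ s, (σ p).val ≤ c := by
  by_contra! h
  have := card_le_card_of_injOn σ.symm (s := Iic ⟨c, hc⟩) (t := s)
    (fun v hv => by
      by_contra hv'
      have := h _ hv'
      simp only [apply_symm_apply, coe_Iic, Set.mem_Iic, Fin.le_def] at this hv
      omega)
    σ.symm.injective.injOn
  simp at this
  omega

end Equiv.Perm

def IsPatternAt {m n : ℕ} (τ : Perm (Fin m)) (σ : Perm (Fin n)) (e : Fin m → Fin n) : Prop :=
  ∀ a b, σ (e a) < σ (e b) ↔ τ a < τ b

section Pattern

variable {m n : ℕ} {τ : Perm (Fin m)} {σ : Perm (Fin n)} {e : Fin m → Fin n}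

lemma Avoids321.of_isPatternAt (he : StrictMono e) (hτ : IsPatternAt τ σ e)
    (hσ : Avoids321 σ) : Avoids321 τ :=
  fun ⟨a, b, c, hab, hbc, h₁, h₂⟩ =>
    hσ ⟨e a, e b, e c, he hab, he hbc, (hτ _ _).2 h₁, (hτ _ _).2 h₂⟩

lemma Avoids4123.of_isPatternAt (he : StrictMono e) (hτ : IsPatternAt τ σ e)
    (hσ : Avoids4123 σ) : Avoids4123 τ :=
  fun ⟨a, b, c, d, hab, hbc, hcd, h₁, h₂, h₃⟩ =>
    hσ ⟨e a, e b, e c, e d, he hab, he hbc, he hcd, (hτ _ _).2 h₁, (hτ _ _).2 h₂, (hτ _ _).2 h₃⟩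

end Pattern

/-- The shape `σ = π 0 ρ` with `π` of length `k - 1` that avoiding 321 and 4123 forces (entries
are counted from `0`). -/
structure IsBlockShaped {n : ℕ} (k : ℕ) (σ : Perm (Fin n)) : Prop where
  val_apply_eq_zero_iff : ∀ p, (σ p).val = 0 ↔ p.val + 1 = k
  strictMonoOn : StrictMonoOn σ {p | p.val + 1 < k}
  val_apply_le : ∀ {p}, p.val + 1 < k → (σ p).val ≤ k
  eq_of_val_apply_le : ∀ {p q}, k ≤ p.val → k ≤ q.val → (σ p).val ≤ k → (σ q).val ≤ k → p = q

namespace IsBlockShaped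

variable {n k : ℕ} {σ : Perm (Fin n)}

lemma le_val_of_apply_lt (hσ : IsBlockShaped k σ) {p q r : Fin n} (hpq : p < q) (hqr : q < r)
    (hq : 0 < (σ q).val) (hqp : σ q < σ p) (hrp : σ r < σ p) : k ≤ p.val := by
  rw [Fin.lt_def] at hpq hqr hqp hrp
  by_contra! hp
  have hpk : (σ p).val ≤ k := by
    by_cases hp' : p.val + 1 = k
    · exact ((hσ.val_apply_eq_zero_iff p).2 hp').le.trans (Nat.zero_le _)
    · exact hσ.val_apply_le (by omega)
  have hqk : k ≤ q.val := by
    by_contra! hq'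
    by_cases hq'' : q.val + 1 = k
    · exact hq.ne' ((hσ.val_apply_eq_zero_iff q).2 hq'')
    · exact absurd (Fin.lt_def.1 (hσ.strictMonoOn (by simp; omega) (by simp; omega)
        (Fin.lt_def.2 hpq))) (by omega)
  have := congrArg Fin.val (hσ.eq_of_val_apply_le (q := r) hqk (by omega) (by omega) (by omega))
  omega

variable {m : ℕ} {τ : Perm (Fin m)} {σ : Perm (Fin (k + m))}

theorem avoids321 (hσ : IsBlockShaped k σ) (hτ : IsPatternAt τ σ (Fin.natAdd k))
    (h : Avoids321 τ) : Avoids321 σ := by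
  rintro ⟨p, q, r, hpq, hqr, h₁, h₂⟩
  have hp := hσ.le_val_of_apply_lt hpq hqr ((Nat.zero_le _).trans_lt h₁) h₂ (h₁.trans h₂)
  obtain ⟨a, rfl⟩ := Fin.exists_natAdd_eq hp
  obtain ⟨b, rfl⟩ := Fin.exists_natAdd_eq (hp.trans (Fin.lt_def.1 hpq).le)
  obtain ⟨c, rfl⟩ := Fin.exists_natAdd_eq (hp.trans (Fin.lt_def.1 (hpq.trans hqr)).le)
  rw [Fin.natAdd_lt_natAdd_iff] at hpq hqr
  exact h ⟨a, b, c, hpq, hqr, (hτ _ _).1 h₁, (hτ _ _).1 h₂⟩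

theorem avoids4123 (hσ : IsBlockShaped k σ) (hτ : IsPatternAt τ σ (Fin.natAdd k))
    (h : Avoids4123 τ) : Avoids4123 σ := by
  rintro ⟨p, q, r, s, hpq, hqr, hrs, h₁, h₂, h₃⟩
  have hp := hσ.le_val_of_apply_lt (hpq.trans hqr) hrs ((Nat.zero_le _).trans_lt h₁)
    (h₂.trans h₃) h₃
  obtain ⟨a, rfl⟩ := Fin.exists_natAdd_eq hp
  obtain ⟨b, rfl⟩ := Fin.exists_natAdd_eq (hp.trans (Fin.lt_def.1 hpq).le)
  obtain ⟨c, rfl⟩ := Fin.exists_natAdd_eq (hp.trans (Fin.lt_def.1 (hpq.trans hqr)).le)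
  obtain ⟨d, rfl⟩ := Fin.exists_natAdd_eq (hp.trans (Fin.lt_def.1 ((hpq.trans hqr).trans hrs)).le)
  rw [Fin.natAdd_lt_natAdd_iff] at hpq hqr hrs
  exact h ⟨a, b, c, d, hpq, hqr, hrs, (hτ _ _).1 h₁, (hτ _ _).1 h₂, (hτ _ _).1 h₃⟩

end IsBlockShaped

section Avoiders

variable {n k : ℕ} {σ : Perm (Fin n)}

lemma pos_and_le_of_val_apply_eq_zero_iff (hzero : ∀ p, (σ p).val = 0 ↔ p.val + 1 = k)
    (p : Fin n) : 0 < k ∧ k ≤ n := by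
  have := (hzero (σ.symm ⟨0, p.pos⟩)).1 (by simp)
  omega

lemma strictMonoOn_of_avoids321 (h321 : Avoids321 σ)
    (hzero : ∀ p, (σ p).val = 0 ↔ p.val + 1 = k) : StrictMonoOn σ {p | p.val + 1 < k} := by
  intro p _ q (hq : q.val + 1 < k) hpq
  by_contra! h
  obtain ⟨hk, hkn⟩ := pos_and_le_of_val_apply_eq_zero_iff hzero p
  have hz : k - 1 < n := by omega
  have hqz : (σ ⟨k - 1, hz⟩).val < (σ q).val := by
    have := (hzero ⟨k - 1, hz⟩).2 (by simp; omega)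
    have := (hzero q).not.2 (by omega)
    omega
  exact h321 ⟨p, q, ⟨k - 1, hz⟩, hpq, Fin.lt_def.2 (by simp; omega), Fin.lt_def.2 hqz,
    lt_of_le_of_ne h (σ.injective.ne (ne_of_gt hpq))⟩

variable (h321 : Avoids321 σ) (h4123 : Avoids4123 σ)
  (hzero : ∀ p, (σ p).val = 0 ↔ p.val + 1 = k)
include h321 h4123 hzero

/-- With `w` the last position before the `0`, `w 0 p q` or `w p q` would be a 4123 or a 321. -/
lemma lt_val_apply_of_avoids {w p q : Fin n} (hw : w.val + 2 = k) (hwk : k < (σ w).val)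
    (hp : k ≤ p.val) (hpq : p < q) (hvp : (σ p).val ≤ k) : k < (σ q).val := by
  by_contra! hvq
  obtain ⟨hk, hkn⟩ := pos_and_le_of_val_apply_eq_zero_iff hzero p
  have hz : k - 1 < n := by omega
  have hp0 : (σ p).val ≠ 0 := (hzero p).not.2 (by omega)
  rcases lt_or_gt_of_ne (σ.injective.ne (ne_of_lt hpq)) with hσpq | hσpq
  · refine h4123 ⟨w, ⟨k - 1, hz⟩, p, q, Fin.lt_def.2 (by simp; omega),
      Fin.lt_def.2 (by simp; omega), hpq, Fin.lt_def.2 ?_, hσpq, Fin.lt_def.2 (by omega)⟩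
    rw [(hzero _).2 (by simp; omega)]
    omega
  · exact h321 ⟨w, p, q, Fin.lt_def.2 (by omega), hpq, hσpq, Fin.lt_def.2 (by omega)⟩

lemma eq_of_val_apply_le_of_avoids {p q : Fin n} (hp : k ≤ p.val) (hq : k ≤ q.val)
    (hvp : (σ p).val ≤ k) (hvq : (σ q).val ≤ k) : p = q := by
  wlog hpq : p < q generalizing p q
  · rcases lt_trichotomy p q with h | h | h
    · exact this hp hq hvp hvq h
    · exact h
    · exact (this hq hp hvq hvp h).symm
  exfalso
  by_cases hbig : ∃ w : Fin n, w.val + 2 = k ∧ k < (σ w).val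
  · obtain ⟨w, hw, hwk⟩ := hbig
    exact (lt_val_apply_of_avoids h321 h4123 hzero hw hwk hp hpq hvp).not_ge hvq
  push Not at hbig
  obtain ⟨hk, hkn⟩ := pos_and_le_of_val_apply_eq_zero_iff hzero p
  have hz : k - 1 < n := by omega
  have hsmall : ∀ r ∈ insert p (insert q (Iic ⟨k - 1, hz⟩)), (σ r).val ≤ k := by
    simp only [mem_insert, mem_Iic, Fin.le_def]
    rintro r (rfl | rfl | hr)
    · exact hvp
    · exact hvq
    · by_cases hr' : r.val + 1 = k
      · rw [(hzero r).2 hr']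
        omega
      · have hw : k - 2 < n := by omega
        have hrw : σ r ≤ σ ⟨k - 2, hw⟩ := (strictMonoOn_of_avoids321 h321 hzero).monotoneOn
          (show r.val + 1 < k by omega) (show k - 2 + 1 < k by omega)
          (Fin.le_def.2 (by simp; omega))
        exact (Fin.le_def.1 hrw).trans (hbig _ (by simp; omega))
  -- `k + 2` positions carrying entries `≤ k`
  have hcard := σ.card_le_of_forall_val_apply_le hsmall
  rw [card_insert_of_notMem (by simp [Fin.le_def, Fin.ext_iff]; omega),
    card_insert_of_notMem (by simp [Fin.le_def]; omega), Fin.card_Iic] at hcard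
  simp at hcard
  omega

lemma val_apply_le_of_avoids {p : Fin n} (hp : p.val + 1 < k) : (σ p).val ≤ k := by
  by_contra! hpk
  set w : Fin n := ⟨k - 2, by omega⟩
  have hwk : k < (σ w).val := hpk.trans_le <| Fin.le_def.1 <|
    (strictMonoOn_of_avoids321 h321 hzero).monotoneOn hp (by simp [w]; omega)
      (Fin.le_def.2 (by simp [w]; omega))
  have hkn : k < n := hwk.trans (σ w).isLt
  set s := (Iic (⟨k - 1, by omega⟩ : Fin n)).erase w
  have hs : #s = k - 1 := by
    rw [card_erase_of_mem (by simp [w, Fin.le_def]; omega), Fin.card_Iic]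
    simp
  have htail : ∀ r ∉ s, (σ r).val ≤ k → k ≤ r.val := by
    intro r hr hrk
    simp only [s, mem_erase, mem_Iic, Fin.le_def, not_and_or, not_not] at hr
    rcases hr with rfl | hr <;> omega
  -- `k + 1` entries are `≤ k` but only `k - 1` of them sit in `s`: two lie in the tail
  obtain ⟨r₁, hr₁s, hr₁⟩ := σ.exists_notMem_val_apply_le hkn (s := s) (by omega)
  obtain ⟨r₂, hr₂s, hr₂⟩ := σ.exists_notMem_val_apply_le hkn (s := insert r₁ s)
    ((card_insert_le _ _).trans (by omega))
  rw [mem_insert, not_or] at hr₂s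
  exact hr₂s.1 (eq_of_val_apply_le_of_avoids h321 h4123 hzero
    (htail r₂ hr₂s.2 hr₂) (htail r₁ hr₁s hr₁) hr₂ hr₁)

theorem isBlockShaped_of_avoids : IsBlockShaped k σ :=
  ⟨hzero, strictMonoOn_of_avoids321 h321 hzero,
    val_apply_le_of_avoids h321 h4123 hzero,
    eq_of_val_apply_le_of_avoids h321 h4123 hzero⟩

end Avoiders

namespace IsBlockShaped

variable {n k : ℕ} {σ : Perm (Fin n)}

/-- The block before the `0` is the increasing arrangement of `{1, …, k} \ {σ p₀}`. -/
lemma val_apply_of_lt (hσ : IsBlockShaped k σ) {p₀ : Fin n} (hp₀ : k ≤ p₀.val)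
    (hv₀ : (σ p₀).val ≤ k) {p : Fin n} (hp : p.val + 1 < k) :
    (σ p).val = if p.val + 1 < (σ p₀).val then p.val + 1 else p.val + 2 := by
  have hgap {a b : Fin n} (hab : a ≤ b) (hb : b.val + 1 < k) :
      (σ a).val + (b.val - a.val) ≤ (σ b).val :=
    Fin.add_sub_le_of_strictMonoOn ((Fin.val_strictMono.comp_strictMonoOn hσ.strictMonoOn).mono
      fun c (hc : c ≤ b) => show c.val + 1 < k by rw [Fin.le_def] at hc; omega) hab
  have hlb (q : Fin n) (hq : q.val + 1 < k) : q.val + 1 ≤ (σ q).val := by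
    have h₀ := hgap (a := ⟨0, by omega⟩) (Fin.le_def.2 (Nat.zero_le _)) hq
    have := (hσ.val_apply_eq_zero_iff ⟨0, by omega⟩).not.2 (by simp; omega)
    simp only at h₀ this
    omega
  have hub (q : Fin n) (hq : q.val + 1 < k) : (σ q).val ≤ q.val + 2 := by
    have h₁ := hgap (a := q) (b := ⟨k - 2, by omega⟩) (Fin.le_def.2 (by simp; omega))
      (by simp; omega)
    have := hσ.val_apply_le (p := ⟨k - 2, by omega⟩) (by simp; omega)
    simp only at h₁ this
    omega
  have hne (q : Fin n) (hq : q.val + 1 < k) : (σ q).val ≠ (σ p₀).val := fun h =>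
    absurd (congrArg Fin.val (σ.injective (Fin.ext h))) (by omega)
  have hj := (hσ.val_apply_eq_zero_iff p₀).not.2 (by omega)
  have := hlb p hp
  have := hub p hp
  split_ifs with h
  -- otherwise the entry at position `σ p₀ - 2` is squeezed to `σ p₀`
  · by_contra
    have h₁ := hgap (a := p) (b := ⟨(σ p₀).val - 2, by omega⟩) (Fin.le_def.2 (by simp; omega))
      (by simp; omega)
    have h₂ := hub ⟨(σ p₀).val - 2, by omega⟩ (by simp; omega)
    have h₃ := hne ⟨(σ p₀).val - 2, by omega⟩ (by simp; omega)
    simp only at h₁ h₂ h₃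
    omega
  -- otherwise the entry at position `σ p₀ - 1` is squeezed to `σ p₀`
  · by_contra
    have h₁ := hgap (a := ⟨(σ p₀).val - 1, by omega⟩) (Fin.le_def.2 (by simp; omega)) hp
    have h₂ := hlb ⟨(σ p₀).val - 1, by omega⟩ (by simp; omega)
    have h₃ := hne ⟨(σ p₀).val - 1, by omega⟩ (by simp; omega)
    simp only at h₁ h₂ h₃
    omega

end IsBlockShaped

section Construction

variable {k m : ℕ}

def tailValue (k : ℕ) (j : Fin k) (v : ℕ) : ℕ := if v = 0 then j.val + 1 else k + v

lemma tailValue_lt_tailValue_iff {j : Fin k} {v w : ℕ} :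
    tailValue k j v < tailValue k j w ↔ v < w := by
  unfold tailValue
  split_ifs <;> omega

lemma tailValue_injective (j : Fin k) : Function.Injective (tailValue k j) := by
  intro v w h
  unfold tailValue at h
  split_ifs at h <;> omega

/-- The entries of `π 0 ρ`: `π` increasing on `{1, …, k} \ {j + 1}`, `ρ` order-isomorphic to `τ`
with the entry `0` of `τ` replaced by `j + 1`. -/
def withPrefixFun (j : Fin k) (τ : Perm (Fin m)) (p : Fin (k + m)) : ℕ :=
  if hp : k ≤ p.val then tailValue k j (τ ⟨p.val - k, by omega⟩)
  else if p.val + 1 = k then 0 else if p.val < j.val then p.val + 1 else p.val + 2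

variable (j : Fin k) (τ : Perm (Fin m))

@[simp]
lemma withPrefixFun_natAdd (t : Fin m) :
    withPrefixFun j τ (Fin.natAdd k t) = tailValue k j (τ t) := by
  simp [withPrefixFun]

lemma withPrefixFun_lt [NeZero m] (p : Fin (k + m)) : withPrefixFun j τ p < k + m := by
  have := NeZero.pos m
  unfold withPrefixFun tailValue
  split_ifs with hp
  · have := (τ ⟨p.val - k, by omega⟩).isLt
    omega
  all_goals omega

lemma withPrefixFun_injective : Function.Injective (withPrefixFun j τ) := by
  intro p q h
  refine Fin.ext ?_
  by_cases hpq : k ≤ p.val ∧ k ≤ q.val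
  · simp only [withPrefixFun, dif_pos hpq.1, dif_pos hpq.2] at h
    have := congrArg Fin.val (τ.injective (Fin.ext (tailValue_injective j h)))
    simp only at this
    omega
  · simp only [withPrefixFun, tailValue] at h
    split_ifs at h <;> omega

noncomputable def withPrefix [NeZero m] (j : Fin k) (τ : Perm (Fin m)) : Perm (Fin (k + m)) :=
  Equiv.ofBijective (fun p => ⟨withPrefixFun j τ p, withPrefixFun_lt j τ p⟩)
    (Finite.injective_iff_bijective.1 fun _ _ h => withPrefixFun_injective j τ (congrArg Fin.val h))

variable [NeZero m]

@[simp]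
lemma val_withPrefix_apply (p : Fin (k + m)) : (withPrefix j τ p).val = withPrefixFun j τ p :=
  rfl

lemma isBlockShaped_withPrefix : IsBlockShaped k (withPrefix j τ) where
  val_apply_eq_zero_iff p := by
    simp only [val_withPrefix_apply, withPrefixFun, tailValue]
    split_ifs <;> grind
  strictMonoOn p _ q (hq : q.val + 1 < k) hpq := by
    rw [Fin.lt_def] at hpq ⊢
    simp only [val_withPrefix_apply, withPrefixFun]
    split_ifs <;> omega
  val_apply_le {p} hp := by
    simp only [val_withPrefix_apply, withPrefixFun]
    split_ifs <;> omega
  eq_of_val_apply_le {p q} hp hq hvp hvq := by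
    obtain ⟨a, rfl⟩ := Fin.exists_natAdd_eq hp
    obtain ⟨b, rfl⟩ := Fin.exists_natAdd_eq hq
    simp only [val_withPrefix_apply, withPrefixFun_natAdd, tailValue] at hvp hvq
    split_ifs at hvp hvq with ha hb <;> try omega
    rw [τ.injective (Fin.ext (ha.trans hb.symm))]

lemma isPatternAt_withPrefix : IsPatternAt τ (withPrefix j τ) (Fin.natAdd k) := by
  intro a b
  rw [Fin.lt_def, Fin.lt_def, val_withPrefix_apply, val_withPrefix_apply, withPrefixFun_natAdd,
    withPrefixFun_natAdd, tailValue_lt_tailValue_iff]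

lemma withPrefix_injective :
    Function.Injective (fun x : Fin k × Perm (Fin m) => withPrefix x.1 x.2) := by
  rintro ⟨j, τ⟩ ⟨j', τ'⟩ h
  have htail (t : Fin m) : tailValue k j (τ t) = tailValue k j' (τ' t) := by
    simpa using congrArg Fin.val (DFunLike.congr_fun h (Fin.natAdd k t))
  obtain rfl : j = j' := by
    have := htail (τ.symm 0)
    simp only [apply_symm_apply, tailValue, Fin.val_zero, if_pos] at this
    split_ifs at this
    · exact Fin.ext (by omega)
    · omega
  exact Prod.ext rfl (Equiv.ext fun t => Fin.ext (tailValue_injective j (htail t)))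

end Construction

lemma apply_eq_zero_iff_forall_val {n k : ℕ} (hk : 1 ≤ k) (hkn : k ≤ n) (σ : Perm (Fin n)) :
    σ ⟨k - 1, by omega⟩ = ⟨0, by omega⟩ ↔ ∀ p, (σ p).val = 0 ↔ p.val + 1 = k := by
  refine ⟨fun h p => ⟨fun hp => ?_, fun hp => ?_⟩, fun h => Fin.ext ((h _).2 (by simp; omega))⟩
  · have := congrArg Fin.val (σ.injective (h.trans (Fin.ext hp.symm)))
    simp only at this
    omega
  · rw [show p = ⟨k - 1, by omega⟩ from Fin.ext (by simp; omega), h]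

variable {k m : ℕ} [NeZero m]

lemma exists_withPrefix_eq {σ : Perm (Fin (k + m))} (hσ : IsBlockShaped k σ) :
    ∃ j τ, withPrefix j τ = σ ∧ IsPatternAt τ σ (Fin.natAdd k) := by
  have hkm : k < k + m := Nat.lt_add_of_pos_right (NeZero.pos m)
  obtain ⟨p₀, hp₀, hv₀⟩ := σ.exists_notMem_val_apply_le hkm (s := Iio ⟨k, hkm⟩) (by simp)
  replace hp₀ : k ≤ p₀.val := by simpa [Fin.le_def] using hp₀
  have hv₀' := (hσ.val_apply_eq_zero_iff p₀).not.2 (by omega)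
  let j : Fin k := ⟨(σ p₀).val - 1, by omega⟩
  have hj : (σ p₀).val = j.val + 1 := by simp only [j]; omega
  let f (t : Fin m) : Fin m :=
    ⟨if (σ (Fin.natAdd k t)).val ≤ k then 0 else (σ (Fin.natAdd k t)).val - k, by
      have := (σ (Fin.natAdd k t)).isLt
      have := NeZero.pos m
      split_ifs <;> omega⟩
  have hf (t : Fin m) : tailValue k j (f t) = σ (Fin.natAdd k t) := by
    simp only [tailValue, f]
    split_ifs with h₁ h₂
    · rw [hσ.eq_of_val_apply_le (by simp) hp₀ h₁ hv₀, hj]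
    all_goals omega
  have hfinj : Function.Injective f := fun a b h => Fin.natAdd_injective m k
    (σ.injective (Fin.ext ((hf a).symm.trans ((congrArg (tailValue k j ·.val) h).trans (hf b)))))
  let τ : Perm (Fin m) := Equiv.ofBijective f (Finite.injective_iff_bijective.1 hfinj)
  refine ⟨j, τ, Equiv.ext fun p => Fin.ext ?_, fun a b => ?_⟩
  · rw [val_withPrefix_apply]
    by_cases hp : k ≤ p.val
    · obtain ⟨t, rfl⟩ := Fin.exists_natAdd_eq hp
      exact (withPrefixFun_natAdd j τ t).trans (hf t)
    · have := hσ.val_apply_eq_zero_iff p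
      simp only [withPrefixFun, dif_neg hp]
      split_ifs with h₁
      · omega
      all_goals
        rw [hσ.val_apply_of_lt hp₀ hv₀ (by omega), hj]
        split_ifs <;> omega
  · rw [Fin.lt_def, Fin.lt_def, ← hf, ← hf, tailValue_lt_tailValue_iff]
    rfl

theorem card_avoiders_apply_eq_zero (hk : 1 ≤ k) :
    Nat.card {σ : Perm (Fin (k + m)) //
        Avoids321 σ ∧ Avoids4123 σ ∧ σ ⟨k - 1, by omega⟩ = ⟨0, by omega⟩} =
      k * Nat.card {τ : Perm (Fin m) // Avoids321 τ ∧ Avoids4123 τ} := by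
  have hkm : k ≤ k + m := Nat.le_add_right k m
  let Φ (x : Fin k × {τ : Perm (Fin m) // Avoids321 τ ∧ Avoids4123 τ}) :
      {σ : Perm (Fin (k + m)) //
        Avoids321 σ ∧ Avoids4123 σ ∧ σ ⟨k - 1, by omega⟩ = ⟨0, by omega⟩} :=
    ⟨withPrefix x.1 x.2,
      (isBlockShaped_withPrefix _ _).avoids321 (isPatternAt_withPrefix _ _) x.2.2.1,
      (isBlockShaped_withPrefix _ _).avoids4123 (isPatternAt_withPrefix _ _) x.2.2.2,
      (apply_eq_zero_iff_forall_val hk hkm _).2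
        (isBlockShaped_withPrefix _ _).val_apply_eq_zero_iff⟩
  have hΦ : Function.Bijective Φ := by
    refine ⟨fun x y h => ?_, fun ⟨σ, h321, h4123, h0⟩ => ?_⟩
    · have := withPrefix_injective (a₁ := (x.1, x.2.1)) (a₂ := (y.1, y.2.1))
        (congrArg Subtype.val h)
      obtain ⟨h₁, h₂⟩ := Prod.ext_iff.1 this
      exact Prod.ext h₁ (Subtype.ext h₂)
    · obtain ⟨j, τ, rfl, hτ⟩ := exists_withPrefix_eq
        (isBlockShaped_of_avoids h321 h4123 ((apply_eq_zero_iff_forall_val hk hkm _).1 h0))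
      exact ⟨(j, ⟨τ, h321.of_isPatternAt (Fin.strictMono_natAdd k) hτ,
        h4123.of_isPatternAt (Fin.strictMono_natAdd k) hτ⟩), rfl⟩
  rw [← Nat.card_eq_of_bijective Φ hΦ, Nat.card_prod, Nat.card_fin]

/-- For `1 ≤ k < n`, the number of (321,4123)-avoiding permutations of `[n]`
with the value 1 in position `k` equals `k` times the number of
(321,4123)-avoiding permutations of `[n-k]`. (0-indexed: `σ (k-1) = 0`.) -/
theorem stmt_4 (n k : ℕ) (hk : 1 ≤ k) (hkn : k < n) :
    Nat.card {σ : Equiv.Perm (Fin n) //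
        Avoids321 σ ∧ Avoids4123 σ ∧ σ ⟨k - 1, by omega⟩ = ⟨0, by omega⟩} =
      k * Nat.card {σ : Equiv.Perm (Fin (n - k)) // Avoids321 σ ∧ Avoids4123 σ} := by
  obtain ⟨m, rfl⟩ : ∃ m, n = k + m := ⟨n - k, by omega⟩
  have : NeZero m := ⟨by omega⟩
  rw [Nat.add_sub_cancel_left]
  exact card_avoiders_apply_eq_zero hk
end

section
/- For every n ≥ 3, any permutation σ of {1,...,n} avoiding 321 and 4123 satisfies σ^{-1}(n) ∈ {n-2, n-1, n}; that is, the largest entry occupies one of the last three positions. -/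
/-!
Let `p` be the position of the largest entry. If `p + 3 < n`, the entries at `p + 1`, `p + 2`,
`p + 3` are all smaller than `σ p`, so 321-avoidance forces them to increase; together with
`σ p` they then form a 4123 pattern.
-/

lemma Equiv.Perm.apply_lt_of_ne_symm {n : ℕ} (σ : Equiv.Perm (Fin n)) {t x : Fin n}
    (ht : (t : ℕ) = n - 1) (hx : x ≠ σ.symm t) : σ x < t := by
  have hne : (σ x : ℕ) ≠ t := Fin.val_ne_of_ne fun h ↦ hx (σ.eq_symm_apply.mpr h)
  have := (σ x).isLt
  rw [Fin.lt_def]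
  omega

lemma Avoids321.apply_lt_apply {n : ℕ} {σ : Equiv.Perm (Fin n)} (h : Avoids321 σ)
    {i j k : Fin n} (hij : i < j) (hjk : j < k) (hji : σ j < σ i) : σ j < σ k := by
  by_contra! hkj
  have hkj' : σ k < σ j := hkj.lt_of_ne (σ.injective.ne hjk.ne')
  exact h ⟨i, j, k, hij, hjk, hkj', hji⟩

/-- For `n ≥ 3`, the largest entry of a (321,4123)-avoiding permutation of `[n]`
sits in one of the last three positions (0-indexed: `σ⁻¹ (n-1) ≥ n - 3`). -/
theorem stmt_6 (n : ℕ) (hn : 3 ≤ n) (σ : Equiv.Perm (Fin n))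
    (h1 : Avoids321 σ) (h2 : Avoids4123 σ) :
    n - 3 ≤ (σ.symm ⟨n - 1, by omega⟩ : ℕ) := by
  by_contra! h
  set p := σ.symm ⟨n - 1, by omega⟩
  have hmax : ∀ x, p < x → σ x < σ p := fun x hpx ↦ by
    rw [σ.apply_symm_apply]
    exact σ.apply_lt_of_ne_symm rfl hpx.ne'
  let j : Fin n := ⟨p + 1, by omega⟩
  let k : Fin n := ⟨p + 2, by omega⟩
  let l : Fin n := ⟨p + 3, by omega⟩
  have hpj : p < j := by simp [Fin.lt_def, j]
  have hjk : j < k := by simp [Fin.lt_def, j, k]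
  have hkl : k < l := by simp [Fin.lt_def, k, l]
  have hσjk : σ j < σ k := h1.apply_lt_apply hpj hjk (hmax j hpj)
  have hσkl : σ k < σ l := h1.apply_lt_apply (hpj.trans hjk) hkl (hmax k (hpj.trans hjk))
  exact h2 ⟨p, j, k, l, hpj, hjk, hkl, hσjk, hσkl, hmax l (hpj.trans (hjk.trans hkl))⟩
end

section
/- For every n ≥ 1, the only permutation σ of {1,...,n} avoiding 321 and vincular 21-43 with σ(1) = n is σ = n 1 2 ... (n-1). -/
/-- `σ` avoids the vincular pattern 21-43: there are no positions
`i, i+1, j, k` with `i + 1 < j < k` and `σ (i+1) < σ i < σ k < σ j`. -/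
def AvoidsV2143 {n : ℕ} (σ : Equiv.Perm (Fin n)) : Prop :=
  ¬ ∃ (i j k : Fin n) (h : (i : ℕ) + 1 < (j : ℕ)), j < k ∧
      σ ⟨(i : ℕ) + 1, Nat.lt_trans h j.isLt⟩ < σ i ∧ σ i < σ k ∧ σ k < σ j

open Set

section

variable {m : ℕ} {σ : Equiv.Perm (Fin (m + 1))}

lemma avoids321_of_strictMonoOn (hσ : StrictMonoOn σ (Ioi 0)) : Avoids321 σ := by
  rintro ⟨i, j, k, hij, hjk, hkj, -⟩
  have hj : j ∈ Ioi 0 := (Fin.zero_le i).trans_lt hij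
  exact (hσ hj (mem_Ioi.2 (hj.trans hjk)) hjk).asymm hkj

lemma avoidsV2143_of_strictMonoOn (hσ : StrictMonoOn σ (Ioi 0)) : AvoidsV2143 σ := by
  rintro ⟨i, j, k, hij, hjk, -, -, hkj⟩
  have hj : j ∈ Ioi 0 := Fin.lt_def.2 (by rw [Fin.val_zero]; omega)
  exact (hσ hj (mem_Ioi.2 (hj.trans hjk)) hjk).asymm hkj

lemma strictMonoOn_of_avoids321_s9 (h321 : Avoids321 σ) (h0 : σ 0 = Fin.last m) :
    StrictMonoOn σ (Ioi 0) := by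
  intro j (hj : 0 < j) k _ hjk
  by_contra! hkj
  have hkj : σ k < σ j := hkj.lt_of_ne (σ.injective.ne hjk.ne')
  have hj0 : σ j < σ 0 := h0 ▸ Fin.lt_last_iff_ne_last.2 (h0 ▸ σ.injective.ne hj.ne')
  exact h321 ⟨0, j, k, hj, hjk, hkj, hj0⟩

lemma eq_finRotate_inv_iff_strictMonoOn :
    σ = (finRotate (m + 1))⁻¹ ↔ StrictMonoOn σ (Ioi 0) ∧ σ 0 = Fin.last m := by
  constructor
  · rintro rfl
    refine ⟨fun a (ha : 0 < a) b (hb : 0 < b) hab => ?_, ?_⟩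
    · rw [Fin.lt_def] at hab ⊢
      simp only [Equiv.Perm.inv_def, coe_finRotate_symm_of_ne_zero ha.ne',
        coe_finRotate_symm_of_ne_zero hb.ne']
      have : 0 < (a : ℕ) := ha
      omega
    · rw [Equiv.Perm.inv_def, Equiv.symm_apply_eq, finRotate_last]
  · rintro ⟨hσ, h0⟩
    -- `σ ∘ finRotate` sends `i < m` to `σ (i + 1)` and `m` to `σ 0 = m`: it increases, so it is `id`.
    have hτ : StrictMono (σ * finRotate (m + 1)) := by
      intro a b hab
      simp only [Equiv.Perm.coe_mul, Function.comp_apply]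
      by_cases hb : b = Fin.last m
      · subst hb
        rw [finRotate_last, h0, Fin.lt_last_iff_ne_last, ← h0, ← finRotate_last]
        exact σ.injective.ne ((finRotate _).injective.ne hab.ne)
      · have ha : a ≠ Fin.last m := (hab.trans_le (Fin.le_last b)).ne
        apply hσ <;> simp only [mem_Ioi, Fin.lt_def, Fin.val_zero, coe_finRotate_of_ne_last ha,
          coe_finRotate_of_ne_last hb] <;> omega
    rw [← mul_eq_one_iff_eq_inv]
    exact Equiv.ext fun x => hτ.apply_eq

end

/-- `(finRotate n)⁻¹` is `n 1 2 ... (n-1)` in 0-indexed form. -/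
theorem stmt_9 (n : ℕ) (hn : 1 ≤ n) (σ : Equiv.Perm (Fin n)) :
    (Avoids321 σ ∧ AvoidsV2143 σ ∧ σ ⟨0, by omega⟩ = ⟨n - 1, by omega⟩) ↔
      σ = (finRotate n)⁻¹ := by
  obtain ⟨m, rfl⟩ := Nat.exists_eq_add_of_le' hn
  change (_ ∧ _ ∧ σ 0 = Fin.last m) ↔ _
  rw [eq_finRotate_inv_iff_strictMonoOn]
  constructor
  · rintro ⟨h321, -, h0⟩
    exact ⟨strictMonoOn_of_avoids321_s9 h321 h0, h0⟩
  · rintro ⟨hσ, h0⟩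
    exact ⟨avoids321_of_strictMonoOn hσ, avoidsV2143_of_strictMonoOn hσ, h0⟩
end

section
/- For every n ≥ 1, the number of permutations of {1,...,n} avoiding both the pattern 321 and the pattern 3412 (Boolean permutations) equals the Fibonacci number F_{2n-1}. -/
/-- `σ` avoids the pattern 3412: no indices `i < j < k < l` with
`σ k < σ l < σ i < σ j`. -/
def Avoids3412 {n : ℕ} (σ : Equiv.Perm (Fin n)) : Prop :=
  ¬ ∃ i j k l : Fin n, i < j ∧ j < k ∧ k < l ∧ σ k < σ l ∧ σ l < σ i ∧ σ i < σ j

/-!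
Permutations are handled through their lists of values, and patterns as sublists.
Write a Boolean permutation of `{0, …, N}` as `p ++ N :: s`. If `s` is nonempty, avoiding `321`
(with `N` as its `3`) makes `s` increasing, and avoiding `3412` (with `N` as its `4`) makes every
entry of `s` after the first exceed every entry of `p`. Hence `s = w :: [M, …, N - 1]` with
`M = |p| + 1`, and `p ++ [w]` is a Boolean permutation of `{0, …, M - 1}`; conversely, every such
gluing is Boolean. So the counts satisfy `b (N + 1) = b N + ∑_{m = 1}^{N} b m`, and
`F₁ + F₃ + ⋯ + F_{2N-1} = F_{2N}` turns this into `b n = F_{2n-1}`.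
-/

open List

namespace List

section Patterns

variable {α : Type*}

structure IsBoolean [LT α] (l : List α) : Prop where
  not321 : ∀ a b c, [a, b, c] <+ l → ¬ (c < b ∧ b < a)
  not3412 : ∀ a b c d, [a, b, c, d] <+ l → ¬ (c < d ∧ d < a ∧ a < b)

theorem IsBoolean.sublist [LT α] {l l' : List α} (h : l.IsBoolean) (hl : l' <+ l) :
    l'.IsBoolean :=
  ⟨fun a b c hs => h.not321 a b c (hs.trans hl),
    fun a b c d hs => h.not3412 a b c d (hs.trans hl)⟩

theorem sublist_append_cons_cases {q p s : List α} {a : α} (h : q <+ p ++ a :: s) :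
    q <+ p ++ s ∨ ∃ q₁ q₂, q = q₁ ++ a :: q₂ ∧ q₁ <+ p ∧ q₂ <+ s := by
  obtain ⟨q₁, q₂, rfl, h₁, h₂⟩ := sublist_append_iff.1 h
  rcases sublist_cons_iff.1 h₂ with h₂ | ⟨r, rfl, hr⟩
  · exact .inl (h₁.append h₂)
  · exact .inr ⟨q₁, r, rfl, h₁, hr⟩

theorem sublist_ofFn_iff {n : ℕ} {f : Fin n → α} {q : List α} :
    q <+ ofFn f ↔ ∃ is : List (Fin n), is.Pairwise (· < ·) ∧ q = is.map f := by
  rw [ofFn_eq_map, sublist_map_iff]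
  refine exists_congr fun is => and_congr_left fun _ =>
    ⟨fun h => (pairwise_lt_finRange n).sublist h, fun h => ?_⟩
  exact sublist_of_subperm_of_pairwise (subperm_of_subset h.nodup fun i _ => mem_finRange i) h
    (pairwise_lt_finRange n)

variable [LinearOrder α]

/-- A new maximum can only play the largest letter of a pattern, which is followed by at least
two letters in both `321` and `3412`. -/
theorem IsBoolean.insert_max {p s : List α} {T : α} (h : (p ++ s).IsBoolean)
    (hs : s.length ≤ 1) (hT : ∀ y ∈ p, y < T) : (p ++ T :: s).IsBoolean := by
  constructor
  · intro a b c hq habc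
    rcases sublist_append_cons_cases hq with hq | ⟨q₁, q₂, hq, h₁, h₂⟩
    · exact h.not321 a b c hq habc
    have hq₁ (y : α) (hy : y ∈ q₁) : y < T := hT y (h₁.subset hy)
    rcases q₁ with _ | ⟨x, _ | ⟨y, _ | ⟨z, q₁⟩⟩⟩ <;>
      simp only [cons_append, nil_append, cons.injEq] at hq
    · obtain ⟨rfl, rfl⟩ := hq
      exact absurd (h₂.length_le.trans hs) (by simp)
    · obtain ⟨rfl, rfl, -⟩ := hq
      exact lt_asymm habc.2 (hq₁ a (by simp))
    · obtain ⟨rfl, rfl, rfl, -⟩ := hq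
      exact lt_asymm habc.1 (hq₁ b (by simp))
    · simp at hq
  · intro a b c d hq habcd
    rcases sublist_append_cons_cases hq with hq | ⟨q₁, q₂, hq, h₁, h₂⟩
    · exact h.not3412 a b c d hq habcd
    have hq₁ (y : α) (hy : y ∈ q₁) : y < T := hT y (h₁.subset hy)
    rcases q₁ with _ | ⟨x, _ | ⟨y, _ | ⟨z, _ | ⟨z', q₁⟩⟩⟩⟩ <;>
      simp only [cons_append, nil_append, cons.injEq] at hq
    · obtain ⟨rfl, rfl⟩ := hq
      exact absurd (h₂.length_le.trans hs) (by simp)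
    · obtain ⟨rfl, rfl, rfl⟩ := hq
      exact absurd (h₂.length_le.trans hs) (by simp)
    · obtain ⟨rfl, rfl, rfl, -⟩ := hq
      have := hq₁ b (by simp)
      order
    · obtain ⟨rfl, rfl, rfl, rfl, -⟩ := hq
      exact lt_asymm habcd.2.1 (hq₁ a (by simp))
    · simp at hq

/-- Appending `x` creates a pattern only if `x` plays its last letter, which lies below two
earlier letters in both `321` and `3412`. -/
theorem IsBoolean.concat {l : List α} {x : α} (h : l.IsBoolean)
    (hx : l.countP (x < ·) ≤ 1) : (l ++ [x]).IsBoolean := by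
  have two_above (a b : α) (hab : [a, b] <+ l) (ha : x < a) (hb : x < b) : False :=
    absurd ((hab.countP_le (p := (x < ·))).trans hx) (by simp [ha, hb])
  constructor
  · intro a b c hq habc
    rcases sublist_append_cons_cases hq with hq | ⟨q₁, q₂, hq, h₁, h₂⟩
    · exact h.not321 a b c (by simpa using hq) habc
    rw [sublist_nil.1 h₂] at hq
    replace hq : [a, b] ++ [c] = q₁ ++ [x] := hq
    obtain ⟨rfl, rfl⟩ := append_singleton_inj.1 hq
    exact two_above a b h₁ (habc.1.trans habc.2) habc.1
  · intro a b c d hq habcd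
    rcases sublist_append_cons_cases hq with hq | ⟨q₁, q₂, hq, h₁, h₂⟩
    · exact h.not3412 a b c d (by simpa using hq) habcd
    rw [sublist_nil.1 h₂] at hq
    replace hq : [a, b, c] ++ [d] = q₁ ++ [x] := hq
    obtain ⟨rfl, rfl⟩ := append_singleton_inj.1 hq
    exact two_above a b ((by simp : [a, b] <+ [a, b, c]).trans h₁) habcd.2.1
      (habcd.2.1.trans habcd.2.2)

theorem IsBoolean.pairwise_lt_of_forall_lt {p s : List α} {T : α}
    (h : (p ++ T :: s).IsBoolean) (hs : s.Nodup) (hT : ∀ y ∈ s, y < T) :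
    s.Pairwise (· < ·) := by
  refine pairwise_iff_forall_sublist.2 fun {y z} hyz => ?_
  have hTyz : [T, y, z] <+ p ++ T :: s := (hyz.cons_cons T).trans (sublist_append_right p _)
  exact lt_of_le_of_ne
    (not_lt.1 fun hzy => h.not321 T y z hTyz ⟨hzy, hT y (hyz.subset (by simp))⟩)
    (pairwise_iff_forall_sublist.1 hs hyz)

theorem IsBoolean.le_of_mem_of_mem {p R : List α} {T w v z : α}
    (h : (p ++ T :: w :: R).IsBoolean) (hv : v ∈ p) (hz : z ∈ R) (hvT : v < T) (hwz : w < z) :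
    v ≤ z :=
  not_lt.1 fun hzv => h.not3412 v T w z
    ((singleton_sublist.2 hv).append ((singleton_sublist.2 hz).cons_cons w |>.cons_cons T))
    ⟨hwz, hzv, hvT⟩

end Patterns

theorem range_append_range' (a b : ℕ) : range a ++ range' a b = range (a + b) := by
  rw [range_eq_range', range_eq_range', ← range'_append]
  simp

theorem perm_range_and_eq_range'_of_append {u v : List ℕ}
    (h : u ++ v ~ range (u.length + v.length)) (huv : ∀ x ∈ u, ∀ y ∈ v, x ≤ y)
    (hv : v.Pairwise (· ≤ ·)) : u ~ range u.length ∧ v = range' u.length v.length := by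
  have hsorted : (u.mergeSort ++ v).Pairwise (· ≤ ·) := pairwise_append.2
    ⟨sortedLE_mergeSort.pairwise, hv, fun x hx y hy => huv x (mem_mergeSort.1 hx) y hy⟩
  have heq : u.mergeSort ++ v = range u.length ++ range' u.length v.length := by
    rw [range_append_range']
    exact (((mergeSort_perm u _).append_right v).trans h).eq_of_pairwise' hsorted
      pairwise_le_range
  obtain ⟨hu, hv⟩ := append_inj heq (by simp)
  exact ⟨hu ▸ (mergeSort_perm u _).symm, hv⟩

theorem exists_eq_concat_of_perm_range_succ {t : List ℕ} {m : ℕ} (ht : t ~ range (m + 1)) :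
    ∃ p w, p.length = m ∧ t = p ++ [w] := by
  obtain ⟨p, w, rfl⟩ := (eq_nil_or_concat' t).resolve_left fun h => by
    simpa [h] using ht.length_eq
  exact ⟨p, w, by simpa using ht.length_eq, rfl⟩

end List

def glue (N : ℕ) (t : List ℕ) : List ℕ :=
  t.dropLast ++ N :: t.getLastD 0 :: range' t.length (N - t.length)

theorem glue_concat (N : ℕ) (p : List ℕ) (w : ℕ) :
    glue N (p ++ [w]) = p ++ N :: w :: range' (p.length + 1) (N - (p.length + 1)) := by
  simp [glue]

theorem perm_glue_concat {p : List ℕ} {w N : ℕ} (ht : p ++ [w] ~ range (p.length + 1))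
    (hN : p.length < N) : glue N (p ++ [w]) ~ range (N + 1) := by
  set M := p.length + 1
  calc glue N (p ++ [w]) ~ N :: (p ++ [w] ++ range' M (N - M)) := by
        rw [glue_concat]; exact perm_middle.trans (.of_eq (by simp [M]))
    _ ~ N :: (range M ++ range' M (N - M)) := (ht.append_right _).cons N
    _ = N :: range N := by rw [range_append_range']; congr; omega
    _ ~ range (N + 1) := by rw [range_succ]; exact (perm_append_singleton N _).symm

theorem isBoolean_glue_concat {p : List ℕ} {w N : ℕ} (h : (p ++ [w]).IsBoolean)
    (ht : ∀ y ∈ p ++ [w], y < p.length + 1) (hN : p.length < N) :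
    (glue N (p ++ [w])).IsBoolean := by
  set M := p.length + 1
  suffices ∀ k, M + k ≤ N → (p ++ N :: w :: range' M k).IsBoolean by
    rw [glue_concat]; exact this _ (by omega)
  intro k
  induction k with
  | zero =>
    refine fun _ => h.insert_max (by simp) fun y hy => ?_
    have := ht y (mem_append_left _ hy)
    omega
  | succ k ih =>
    intro hk
    have hp : p.countP (M + k < ·) = 0 := countP_eq_zero.2 fun y hy => by
      have := ht y (mem_append_left _ hy)
      simp only [decide_eq_true_eq]
      omega
    have hR : (range' M k).countP (M + k < ·) = 0 := countP_eq_zero.2 fun y hy => by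
      simp only [mem_range'_1] at hy
      simp only [decide_eq_true_eq]
      omega
    have hw : ¬ M + k < w := by
      have := ht w (by simp)
      omega
    have hcount : (p ++ N :: w :: range' M k).countP (M + k < ·) ≤ 1 := by
      simp [countP_cons, hp, hR, hw, apply_ite (· ≤ 1)]
    simpa [range'_concat] using (ih (by omega)).concat hcount

theorem glue_perm_and_isBoolean {t : List ℕ} {m N : ℕ} (hmN : m < N) (ht : t ~ range (m + 1))
    (hb : t.IsBoolean) : glue N t ~ range (N + 1) ∧ (glue N t).IsBoolean := by
  obtain ⟨p, w, rfl, rfl⟩ := exists_eq_concat_of_perm_range_succ ht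
  exact ⟨perm_glue_concat ht hmN,
    isBoolean_glue_concat hb (fun y hy => mem_range.1 (ht.mem_iff.1 hy)) hmN⟩

theorem eq_concat_max_or_eq_glue {N : ℕ} {l : List ℕ} (hl : l ~ range (N + 1))
    (hb : l.IsBoolean) :
    (∃ t, t ~ range N ∧ t.IsBoolean ∧ l = t ++ [N]) ∨
      ∃ p w, p.length < N ∧ p ++ [w] ~ range (p.length + 1) ∧ (p ++ [w]).IsBoolean ∧
        l = glue N (p ++ [w]) := by
  have hnd : l.Nodup := hl.nodup_iff.2 nodup_range
  obtain ⟨p, s, rfl⟩ := append_of_mem (hl.mem_iff.2 (mem_range.2 N.lt_succ_self))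
  have hps : p ++ s ~ range N := (perm_cons N).1 <| perm_middle.symm.trans <|
    hl.trans (by rw [range_succ]; exact perm_append_singleton N _)
  have hlt : ∀ y ∈ p ++ s, y < N := fun y hy => mem_range.1 (hps.mem_iff.1 hy)
  rcases s with _ | ⟨w, R⟩
  · exact .inl ⟨p, by simpa using hps, hb.sublist (sublist_append_left _ _), rfl⟩
  right
  have hsorted : (w :: R).Pairwise (· < ·) :=
    hb.pairwise_lt_of_forall_lt
      (hnd.sublist ((sublist_cons_self N _).trans (sublist_append_right p _)))
      fun y hy => hlt y (mem_append_right p hy)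
  have hwR : ∀ z ∈ R, w < z := (pairwise_cons.1 hsorted).1
  have hpR : ∀ x ∈ p ++ [w], ∀ z ∈ R, x ≤ z := by
    simp only [mem_append, mem_singleton]
    rintro x (hx | rfl) z hz
    · exact hb.le_of_mem_of_mem hx hz (hlt x (mem_append_left _ hx)) (hwR z hz)
    · exact (hwR z hz).le
  have hlen : p.length + 1 + R.length = N := by
    have := hps.length_eq
    simp only [length_append, length_cons, length_range] at this
    omega
  obtain ⟨ht, hR⟩ := perm_range_and_eq_range'_of_append (u := p ++ [w]) (v := R)
    (by rwa [append_assoc, singleton_append, length_append, length_singleton, hlen]) hpR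
    ((pairwise_cons.1 hsorted).2.imp le_of_lt)
  rw [length_append, length_singleton] at ht hR
  refine ⟨p, w, by omega, ht, hb.sublist ?_, ?_⟩
  · exact (Sublist.refl p).append (singleton_sublist.2 (by simp))
  · rw [glue_concat, hR]
    congr 4
    omega

theorem glue_concat_inj {p₁ p₂ : List ℕ} {w₁ w₂ N : ℕ} (hlt : ∀ y ∈ p₁ ++ [w₁], y < N)
    (h : glue N (p₁ ++ [w₁]) = glue N (p₂ ++ [w₂])) : p₁ ++ [w₁] = p₂ ++ [w₂] := by
  rw [glue_concat, glue_concat] at h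
  have hp : N ∉ p₁ := fun hN => (hlt N (mem_append_left _ hN)).false
  have hw : N ∉ w₁ :: range' (p₁.length + 1) (N - (p₁.length + 1)) := by
    simp only [mem_cons, mem_range'_1, not_or]
    exact ⟨(hlt w₁ (by simp)).ne', by omega⟩
  obtain ⟨rfl, -, h⟩ := (append_cons_inj_of_notMem hp hw).1 h
  rw [(cons_eq_cons.1 h).1]

theorem concat_ne_glue {t p : List ℕ} {w N : ℕ} (hlt : ∀ y ∈ t, y < N) :
    t ++ [N] ≠ glue N (p ++ [w]) := by
  rw [glue_concat]
  intro h
  have := (append_cons_inj_of_notMem (fun hN => (hlt N hN).false) not_mem_nil).1 h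
  simp at this

abbrev BooleanPerms (n : ℕ) : Type := {l : List ℕ // l ~ range n ∧ l.IsBoolean}

section Transfer

variable {n : ℕ}

def permList (σ : Equiv.Perm (Fin n)) : List ℕ := ofFn fun i => (σ i : ℕ)

theorem permList_perm_range (σ : Equiv.Perm (Fin n)) : permList σ ~ range n := by
  refine (subperm_of_subset ?_ fun x hx => ?_).perm_of_length_le (by simp [permList])
  · exact nodup_ofFn.2 (Fin.val_injective.comp σ.injective)
  · obtain ⟨i, rfl⟩ := mem_ofFn.1 hx
    exact mem_range.2 (σ i).2

theorem permList_injective : Function.Injective (permList (n := n)) :=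
  fun _ _ h => Equiv.ext fun i => Fin.ext (congrFun (ofFn_injective h) i)

theorem exists_permList_eq {l : List ℕ} (hl : l ~ range n) :
    ∃ σ : Equiv.Perm (Fin n), permList σ = l := by
  have hlen : l.length = n := by simpa using hl.length_eq
  have hlt (i : Fin n) : l[i.1] < n := mem_range.1 (hl.mem_iff.1 (getElem_mem _))
  let f (i : Fin n) : Fin n := ⟨l[i.1], hlt i⟩
  have hf : Function.Injective f := fun i j hij =>
    Fin.ext ((hl.nodup_iff.2 nodup_range).getElem_inj_iff.1 (congrArg Fin.val hij))
  exact ⟨.ofBijective f (Finite.injective_iff_bijective.1 hf),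
    ext_getElem (by simp [permList, hlen]) fun i _ _ => by simp [permList, f]⟩

theorem isBoolean_permList_iff (σ : Equiv.Perm (Fin n)) :
    (permList σ).IsBoolean ↔ Avoids321 σ ∧ Avoids3412 σ := by
  constructor
  · rintro ⟨h321, h3412⟩
    refine ⟨fun ⟨i, j, k, hij, hjk, h₁, h₂⟩ => h321 _ _ _ ?_ ⟨h₁, h₂⟩,
      fun ⟨i, j, k, l, hij, hjk, hkl, h₁, h₂, h₃⟩ => h3412 _ _ _ _ ?_ ⟨h₁, h₂, h₃⟩⟩
    · exact sublist_ofFn_iff.2 ⟨[i, j, k], by simp [hij, hjk, hij.trans hjk], rfl⟩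
    · refine sublist_ofFn_iff.2 ⟨[i, j, k, l], ?_, rfl⟩
      simp [hij, hjk, hkl, hij.trans hjk, hjk.trans hkl, (hij.trans hjk).trans hkl]
  · rintro ⟨h321, h3412⟩
    constructor
    · intro a b c hq habc
      obtain ⟨is, his, hq⟩ := sublist_ofFn_iff.1 hq
      obtain ⟨i, j, k, rfl⟩ := length_eq_three.1 (by simpa using (congrArg length hq).symm)
      obtain ⟨rfl, rfl, rfl⟩ : a = _ ∧ b = _ ∧ c = _ := by simpa using hq
      obtain ⟨⟨hij, -⟩, hjk⟩ : (i < j ∧ i < k) ∧ j < k := by simpa using his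
      exact h321 ⟨i, j, k, hij, hjk, habc⟩
    · intro a b c d hq habcd
      obtain ⟨is, his, hq⟩ := sublist_ofFn_iff.1 hq
      obtain ⟨i, j, k, l, rfl⟩ := length_eq_four.1 (by simpa using (congrArg length hq).symm)
      obtain ⟨rfl, rfl, rfl, rfl⟩ : a = _ ∧ b = _ ∧ c = _ ∧ d = _ := by simpa using hq
      obtain ⟨⟨hij, -⟩, ⟨hjk, -⟩, hkl⟩ : (i < j ∧ i < k ∧ i < l) ∧ (j < k ∧ j < l) ∧ k < l := by
        simpa using his
      exact h3412 ⟨i, j, k, l, hij, hjk, hkl, habcd⟩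

noncomputable def booleanPermsEquiv (n : ℕ) :
    {σ : Equiv.Perm (Fin n) // Avoids321 σ ∧ Avoids3412 σ} ≃ BooleanPerms n :=
  .ofBijective
    (fun σ => ⟨permList σ.1, permList_perm_range σ.1, (isBoolean_permList_iff σ.1).2 σ.2⟩)
    ⟨fun _ _ h => Subtype.ext (permList_injective (congrArg Subtype.val h)),
      fun ⟨l, hl, hb⟩ => by
        obtain ⟨σ, rfl⟩ := exists_permList_eq hl
        exact ⟨⟨σ, (isBoolean_permList_iff σ).1 hb⟩, rfl⟩⟩

end Transfer

theorem Nat.sum_range_fib_two_mul_add_one (n : ℕ) :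
    ∑ m ∈ Finset.range n, Nat.fib (2 * m + 1) = Nat.fib (2 * n) := by
  induction n with
  | zero => simp
  | succ n ih => rw [Finset.sum_range_succ, ih, Nat.mul_succ, Nat.fib_add_two]

namespace BooleanPerms

instance (n : ℕ) : Finite (BooleanPerms n) := .of_equiv _ (booleanPermsEquiv n)

theorem lt_of_mem {n : ℕ} (t : BooleanPerms n) {y : ℕ} (hy : y ∈ t.1) : y < n :=
  mem_range.1 (t.2.1.mem_iff.1 hy)

def concatMax {N : ℕ} (t : BooleanPerms N) : BooleanPerms (N + 1) :=
  ⟨t.1 ++ [N], by rw [range_succ]; exact t.2.1.append_right _,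
    (by simpa using t.2.2 : (t.1 ++ []).IsBoolean).insert_max (by simp) fun _ => t.lt_of_mem⟩

def glueMax {N : ℕ} (m : Fin N) (t : BooleanPerms (m + 1)) : BooleanPerms (N + 1) :=
  ⟨glue N t.1, glue_perm_and_isBoolean m.2 t.2.1 t.2.2⟩

theorem concatMax_glueMax_injective (N : ℕ) :
    Function.Injective (Sum.elim concatMax fun x : Σ m : Fin N, BooleanPerms (m + 1) =>
      glueMax x.1 x.2) := by
  rintro (t₁ | ⟨m₁, t₁⟩) (t₂ | ⟨m₂, t₂⟩) h <;> replace h := congrArg Subtype.val h <;>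
    dsimp only [Sum.elim_inl, Sum.elim_inr, concatMax, glueMax] at h
  · exact congrArg Sum.inl (Subtype.ext (append_cancel_right h))
  · obtain ⟨p, w, -, hpw⟩ := exists_eq_concat_of_perm_range_succ t₂.2.1
    exact absurd (hpw ▸ h) (concat_ne_glue fun _ => t₁.lt_of_mem)
  · obtain ⟨p, w, -, hpw⟩ := exists_eq_concat_of_perm_range_succ t₁.2.1
    exact absurd (hpw ▸ h.symm) (concat_ne_glue fun _ => t₂.lt_of_mem)
  · obtain ⟨p₁, w₁, -, hpw₁⟩ := exists_eq_concat_of_perm_range_succ t₁.2.1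
    obtain ⟨p₂, w₂, -, hpw₂⟩ := exists_eq_concat_of_perm_range_succ t₂.2.1
    have ht : t₁.1 = t₂.1 := by
      rw [hpw₁, hpw₂] at h ⊢
      exact glue_concat_inj (fun y hy => (t₁.lt_of_mem (by rwa [hpw₁])).trans_le m₁.2) h
    obtain rfl : m₁ = m₂ := by
      have h₁ := t₁.2.1.length_eq
      rw [ht, t₂.2.1.length_eq, length_range, length_range] at h₁
      exact Fin.ext (by omega)
    obtain rfl := Subtype.ext ht
    rfl

theorem concatMax_glueMax_surjective (N : ℕ) :
    Function.Surjective (Sum.elim concatMax fun x : Σ m : Fin N, BooleanPerms (m + 1) =>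
      glueMax x.1 x.2) := by
  rintro ⟨l, hl, hb⟩
  rcases eq_concat_max_or_eq_glue hl hb with ⟨t, ht, htb, rfl⟩ | ⟨p, w, hpN, ht, htb, rfl⟩
  · exact ⟨.inl ⟨t, ht, htb⟩, rfl⟩
  · exact ⟨.inr ⟨⟨p.length, hpN⟩, ⟨p ++ [w], ht, htb⟩⟩, rfl⟩

noncomputable def succEquiv (N : ℕ) :
    BooleanPerms N ⊕ (Σ m : Fin N, BooleanPerms (m + 1)) ≃ BooleanPerms (N + 1) :=
  .ofBijective _ ⟨concatMax_glueMax_injective N, concatMax_glueMax_surjective N⟩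

theorem card_zero : Nat.card (BooleanPerms 0) = 1 := by
  refine Nat.card_eq_one_iff_exists.2 ⟨⟨[], .nil, ?_⟩, fun ⟨l, hl, _⟩ => ?_⟩
  · exact ⟨fun _ _ _ h => absurd h.length_le (by simp),
      fun _ _ _ _ h => absurd h.length_le (by simp)⟩
  · exact Subtype.ext (perm_nil.1 hl)

theorem card_succ (N : ℕ) :
    Nat.card (BooleanPerms (N + 1)) =
      Nat.card (BooleanPerms N) + ∑ m : Fin N, Nat.card (BooleanPerms (m + 1)) := by
  rw [← Nat.card_congr (succEquiv N), Nat.card_sum, Nat.card_sigma]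

theorem card_succ_eq_fib (N : ℕ) : Nat.card (BooleanPerms (N + 1)) = Nat.fib (2 * N + 1) := by
  induction N using Nat.strong_induction_on with
  | _ N ih =>
    have hsum : ∑ m : Fin N, Nat.card (BooleanPerms (m + 1)) = Nat.fib (2 * N) := by
      rw [← Nat.sum_range_fib_two_mul_add_one, ← Fin.sum_univ_eq_sum_range]
      exact Finset.sum_congr rfl fun m _ => ih m m.2
    rw [card_succ, hsum]
    rcases N with _ | K
    · simp [card_zero]
    · rw [ih K K.lt_succ_self, show 2 * (K + 1) + 1 = 2 * K + 1 + 2 by ring,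
        Nat.fib_add_two (n := 2 * K + 1)]
      rfl

end BooleanPerms

theorem stmt_10 (n : ℕ) (hn : 1 ≤ n) :
    Nat.card {σ : Equiv.Perm (Fin n) // Avoids321 σ ∧ Avoids3412 σ} =
      Nat.fib (2 * n - 1) := by
  obtain ⟨N, rfl⟩ := Nat.exists_eq_add_of_le' hn
  rw [Nat.card_congr (booleanPermsEquiv _), BooleanPerms.card_succ_eq_fib,
    show 2 * (N + 1) - 1 = 2 * N + 1 by omega]
end

section
/- Let b_{n,k} be the number of permutations σ of {1,...,n} avoiding 321 and 3412 with σ(k) = 1. Then for n > 1, b_{n,1} = b_{n,2} = F_{2n-3}, and for 3 ≤ k ≤ n, b_{n,k} = b_{n-1,k-1}. -/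
/-- `b n k` is the number of (321,3412)-avoiding permutations of `[n]` with the
value `1` in (1-indexed) position `k`. -/
noncomputable def b (n k : ℕ) : ℕ :=
  Nat.card {σ : Equiv.Perm (Fin n) // Avoids321 σ ∧ Avoids3412 σ ∧
    ∃ h : k - 1 < n, (σ ⟨k - 1, h⟩ : ℕ) = 0}

namespace AvoidingPerm

open Equiv Finset

variable {n : ℕ}

def insertAt (p v : Fin (n+1)) (τ : Perm (Fin n)) : Perm (Fin (n+1)) :=
  (finSuccEquiv' p).trans (τ.optionCongr.trans (finSuccEquiv' v).symm)

@[simp] lemma insertAt_apply_self (p v : Fin (n+1)) (τ : Perm (Fin n)) :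
    insertAt p v τ p = v := by
  simp [insertAt, finSuccEquiv'_at, finSuccEquiv'_symm_none]

@[simp] lemma insertAt_apply_succAbove (p v : Fin (n+1)) (τ : Perm (Fin n)) (j : Fin n) :
    insertAt p v τ (p.succAbove j) = v.succAbove (τ j) := by
  simp [insertAt, finSuccEquiv'_succAbove, finSuccEquiv'_symm_some]

def deleteAt (p : Fin (n+1)) (σ : Perm (Fin (n+1))) : Perm (Fin n) :=
  removeNone ((finSuccEquiv' p).symm.trans (σ.trans (finSuccEquiv' (σ p))))

lemma succAbove_deleteAt_apply (p : Fin (n+1)) (σ : Perm (Fin (n+1))) (j : Fin n) :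
    (σ p).succAbove (deleteAt p σ j) = σ (p.succAbove j) := by
  obtain ⟨w, hw⟩ := Fin.exists_succAbove_eq
    (show σ (p.succAbove j) ≠ σ p from fun h => Fin.succAbove_ne p j (σ.injective h))
  have hsome : ((finSuccEquiv' p).symm.trans (σ.trans (finSuccEquiv' (σ p)))) (some j) =
      some w := by
    simp [finSuccEquiv'_symm_some, ← hw, finSuccEquiv'_succAbove]
  have hdel : deleteAt p σ j = w :=
    Option.some_injective _ ((removeNone_some _ ⟨w, hsome⟩).trans hsome)
  rw [hdel, hw]

lemma deleteAt_insertAt (p v : Fin (n+1)) (τ : Perm (Fin n)) :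
    deleteAt p (insertAt p v τ) = τ := by
  ext1 j
  apply (Fin.strictMono_succAbove v).injective
  simpa using succAbove_deleteAt_apply p (insertAt p v τ) j

lemma insertAt_deleteAt (p : Fin (n+1)) (σ : Perm (Fin (n+1))) :
    insertAt p (σ p) (deleteAt p σ) = σ := by
  ext1 x
  rcases eq_or_ne x p with rfl | hx
  · simp
  · obtain ⟨j, rfl⟩ := Fin.exists_succAbove_eq hx
    rw [insertAt_apply_succAbove, succAbove_deleteAt_apply]

lemma deleteAt_lt_deleteAt_iff (p : Fin (n+1)) (σ : Perm (Fin (n+1))) (i j : Fin n) :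
    deleteAt p σ i < deleteAt p σ j ↔ σ (p.succAbove i) < σ (p.succAbove j) := by
  rw [← Fin.succAbove_lt_succAbove_iff (p := σ p), succAbove_deleteAt_apply,
    succAbove_deleteAt_apply]

lemma avoids321_deleteAt {σ : Perm (Fin (n+1))} (p : Fin (n+1)) (h : Avoids321 σ) :
    Avoids321 (deleteAt p σ) := by
  rintro ⟨i, j, k, hij, hjk, hkj, hji⟩
  exact h ⟨p.succAbove i, p.succAbove j, p.succAbove k,
    Fin.succAbove_lt_succAbove_iff.2 hij, Fin.succAbove_lt_succAbove_iff.2 hjk,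
    (deleteAt_lt_deleteAt_iff p σ k j).1 hkj, (deleteAt_lt_deleteAt_iff p σ j i).1 hji⟩

lemma avoids3412_deleteAt {σ : Perm (Fin (n+1))} (p : Fin (n+1)) (h : Avoids3412 σ) :
    Avoids3412 (deleteAt p σ) := by
  rintro ⟨i, j, k, l, hij, hjk, hkl, hkl', hli, hij'⟩
  exact h ⟨p.succAbove i, p.succAbove j, p.succAbove k, p.succAbove l,
    Fin.succAbove_lt_succAbove_iff.2 hij, Fin.succAbove_lt_succAbove_iff.2 hjk,
    Fin.succAbove_lt_succAbove_iff.2 hkl, (deleteAt_lt_deleteAt_iff p σ k l).1 hkl',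
    (deleteAt_lt_deleteAt_iff p σ l i).1 hli, (deleteAt_lt_deleteAt_iff p σ i j).1 hij'⟩

/-- A point `(p, v)` of the graph of a permutation that lies in no occurrence of 321 or 3412. -/
def IsInert (p v : Fin (n+1)) : Prop :=
  ((p : ℕ) ≤ 1 ∧ (v : ℕ) = 0) ∨ ((p : ℕ) = 0 ∧ (v : ℕ) = 1)

lemma avoids321_insertAt_iff {p v : Fin (n+1)} (hpv : IsInert p v) (τ : Perm (Fin n)) :
    Avoids321 (insertAt p v τ) ↔ Avoids321 τ := by
  refine ⟨fun h => deleteAt_insertAt p v τ ▸ avoids321_deleteAt p h, fun h => ?_⟩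
  rintro ⟨i, j, k, hij, hjk, hkj, hji⟩
  have hv := insertAt_apply_self p v τ
  have hne : ∀ x ∈ [i, j, k], x ≠ p := by
    simp only [IsInert, Fin.lt_def] at hpv hij hjk hkj hji
    simp only [List.mem_cons, List.not_mem_nil, or_false]
    rintro x (rfl | rfl | rfl) rfl <;> rw [hv] at * <;> omega
  obtain ⟨i, rfl⟩ := Fin.exists_succAbove_eq (hne i (by simp))
  obtain ⟨j, rfl⟩ := Fin.exists_succAbove_eq (hne j (by simp))
  obtain ⟨k, rfl⟩ := Fin.exists_succAbove_eq (hne k (by simp))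
  simp only [insertAt_apply_succAbove, Fin.succAbove_lt_succAbove_iff] at hij hjk hkj hji
  exact h ⟨i, j, k, hij, hjk, hkj, hji⟩

lemma avoids3412_insertAt_iff {p v : Fin (n+1)} (hpv : IsInert p v) (τ : Perm (Fin n)) :
    Avoids3412 (insertAt p v τ) ↔ Avoids3412 τ := by
  refine ⟨fun h => deleteAt_insertAt p v τ ▸ avoids3412_deleteAt p h, fun h => ?_⟩
  rintro ⟨i, j, k, l, hij, hjk, hkl, hkl', hli, hij'⟩
  have hv := insertAt_apply_self p v τ
  have hne : ∀ x ∈ [i, j, k, l], x ≠ p := by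
    simp only [IsInert, Fin.lt_def] at hpv hij hjk hkl hkl' hli hij'
    simp only [List.mem_cons, List.not_mem_nil, or_false]
    rintro x (rfl | rfl | rfl | rfl) rfl <;> rw [hv] at * <;> omega
  obtain ⟨i, rfl⟩ := Fin.exists_succAbove_eq (hne i (by simp))
  obtain ⟨j, rfl⟩ := Fin.exists_succAbove_eq (hne j (by simp))
  obtain ⟨k, rfl⟩ := Fin.exists_succAbove_eq (hne k (by simp))
  obtain ⟨l, rfl⟩ := Fin.exists_succAbove_eq (hne l (by simp))
  simp only [insertAt_apply_succAbove, Fin.succAbove_lt_succAbove_iff]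
    at hij hjk hkl hkl' hli hij'
  exact h ⟨i, j, k, l, hij, hjk, hkl, hkl', hli, hij'⟩

lemma card_avoiding_apply_eq_and {p v : Fin (n+1)} (hpv : IsInert p v)
    (P : Perm (Fin (n+1)) → Prop) (R : Perm (Fin n) → Prop)
    (hPR : ∀ τ, P (insertAt p v τ) ↔ R τ) :
    Nat.card {σ : Perm (Fin (n+1)) // Avoids321 σ ∧ Avoids3412 σ ∧ σ p = v ∧ P σ} =
      Nat.card {τ : Perm (Fin n) // Avoids321 τ ∧ Avoids3412 τ ∧ R τ} := by
  have insertAt_deleteAt_of_apply {σ : Perm (Fin (n+1))} (hσ : σ p = v) :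
      insertAt p v (deleteAt p σ) = σ := hσ ▸ insertAt_deleteAt p σ
  refine Nat.card_congr
    { toFun := fun σ => ⟨deleteAt p σ, avoids321_deleteAt p σ.2.1,
        avoids3412_deleteAt p σ.2.2.1,
        (hPR _).1 (by rw [insertAt_deleteAt_of_apply σ.2.2.2.1]; exact σ.2.2.2.2)⟩
      invFun := fun τ => ⟨insertAt p v τ, (avoids321_insertAt_iff hpv τ).2 τ.2.1,
        (avoids3412_insertAt_iff hpv τ).2 τ.2.2.1, insertAt_apply_self p v τ,
        (hPR τ).2 τ.2.2.2⟩
      left_inv := fun σ => Subtype.ext (insertAt_deleteAt_of_apply σ.2.2.2.1)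
      right_inv := fun τ => Subtype.ext (deleteAt_insertAt p v τ) }

lemma card_avoiding_apply_eq_zero {p : Fin (n+1)} (hp : (p : ℕ) ≤ 1) :
    Nat.card {σ : Perm (Fin (n+1)) // Avoids321 σ ∧ Avoids3412 σ ∧ σ p = 0} =
      Nat.card {τ : Perm (Fin n) // Avoids321 τ ∧ Avoids3412 τ} := by
  simpa only [and_true] using card_avoiding_apply_eq_and (Or.inl ⟨hp, rfl⟩)
    (fun _ => True) (fun _ => True) (fun _ => Iff.rfl)

lemma apply_zero_eq_one {σ : Perm (Fin (n+2))} (h321 : Avoids321 σ) (h3412 : Avoids3412 σ)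
    {p : Fin (n+2)} (hp : 2 ≤ (p : ℕ)) (hσp : σ p = 0) : σ 0 = 1 := by
  have h01 : (0 : Fin (n+2)) < 1 := by simp
  have h1p : (1 : Fin (n+2)) < p := by rw [Fin.lt_def, Fin.val_one]; omega
  have hσ0 : σ 0 ≠ 0 := fun h => (h01.trans h1p).ne (σ.injective (h.trans hσp.symm))
  have hσ1 : σ 1 ≠ 0 := fun h => h1p.ne (σ.injective (h.trans hσp.symm))
  have hlt : σ 0 < σ 1 := by
    refine (lt_or_gt_of_ne (σ.injective.ne h01.ne)).resolve_right fun h => h321 ?_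
    exact ⟨0, 1, p, h01, h1p, hσp ▸ Fin.pos_iff_ne_zero.2 hσ1, h⟩
  -- The value `1` sits before `p` (a 321 through position 0) or after it (a 3412 with 0, 1, p).
  by_contra hne
  obtain ⟨r, hr⟩ := σ.surjective 1
  have h1σ0 : 1 < σ 0 := by
    simp only [Fin.lt_def, Fin.val_one, ne_eq, Fin.ext_iff, Fin.val_zero] at hσ0 hne ⊢; omega
  have hσpr : σ p < σ r := by simp [hσp, hr]
  rcases lt_trichotomy r p with hrp | rfl | hpr
  · have h0r : 0 < r := Fin.pos_iff_ne_zero.2 fun h => hne (h ▸ hr)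
    exact h321 ⟨0, r, p, h0r, hrp, hσpr, hr ▸ h1σ0⟩
  · exact hσpr.false
  · exact h3412 ⟨0, 1, p, r, h01, h1p, hpr, hσpr, hr ▸ h1σ0, hlt⟩

noncomputable def avoidCount (n : ℕ) : ℕ :=
  Nat.card {σ : Perm (Fin n) // Avoids321 σ ∧ Avoids3412 σ}

lemma b_succ_eq_card {k : ℕ} (hk : k < n + 1) :
    b (n+1) (k+1) = Nat.card
      {σ : Perm (Fin (n+1)) // Avoids321 σ ∧ Avoids3412 σ ∧ σ ⟨k, hk⟩ = 0} := by
  refine Nat.card_congr (subtypeEquivRight fun σ => and_congr_right' (and_congr_right' ?_))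
  exact ⟨fun ⟨_, h⟩ => Fin.ext h, fun h => ⟨hk, congrArg Fin.val h⟩⟩

lemma avoidCount_zero : avoidCount 0 = 1 := by
  have hσ (σ : Perm (Fin 0)) : Avoids321 σ ∧ Avoids3412 σ :=
    ⟨fun ⟨i, _⟩ => i.elim0, fun ⟨i, _⟩ => i.elim0⟩
  rw [avoidCount, Nat.card_congr (subtypeUnivEquiv hσ)]
  exact Nat.card_unique

lemma avoidCount_eq_sum_b (n : ℕ) : avoidCount (n+1) = ∑ k ∈ range (n+1), b (n+1) (k+1) := by
  rw [← Fin.sum_univ_eq_sum_range, sum_congr rfl fun p _ => b_succ_eq_card p.isLt,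
    ← Nat.card_sigma]
  refine Nat.card_congr
    { toFun := fun σ => ⟨σ.1.symm 0, σ.1, σ.2.1, σ.2.2, σ.1.apply_symm_apply 0⟩
      invFun := fun x => ⟨x.2.1, x.2.2.1, x.2.2.2.1⟩
      left_inv := fun σ => rfl
      right_inv := ?_ }
  rintro ⟨p, σ, h321, h3412, hσp⟩
  obtain rfl : σ.symm 0 = p := by rw [← hσp, symm_apply_apply]
  rfl

lemma b_succ_of_le_one {k : ℕ} (hk : k ≤ 1) (hkn : k < n + 1) :
    b (n+1) (k+1) = avoidCount n := by
  rw [b_succ_eq_card hkn, card_avoiding_apply_eq_zero hk, avoidCount]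

lemma avoidCount_one : avoidCount 1 = 1 := by
  rw [avoidCount_eq_sum_b, sum_range_one, b_succ_of_le_one zero_le_one zero_lt_one,
    avoidCount_zero]

lemma b_add_three {m k : ℕ} (hk : k < m) : b (m+2) (k+3) = b (m+1) (k+2) := by
  rw [b_succ_eq_card (show k + 2 < m + 2 by omega), b_succ_eq_card (show k + 1 < m + 1 by omega)]
  have hpos : (⟨k + 2, by omega⟩ : Fin (m+2)) = Fin.succAbove 0 ⟨k + 1, by omega⟩ := rfl
  rw [← card_avoiding_apply_eq_and (p := 0) (v := 1) (Or.inr ⟨rfl, Fin.val_one _⟩)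
    (fun σ => σ ⟨k + 2, by omega⟩ = 0) (fun τ => τ ⟨k + 1, by omega⟩ = 0)]
  · refine Nat.card_congr (subtypeEquivRight fun σ => ?_)
    exact ⟨fun ⟨h321, h3412, hσ⟩ =>
      ⟨h321, h3412, apply_zero_eq_one h321 h3412 (by simp) hσ, hσ⟩,
      fun ⟨h321, h3412, _, hσ⟩ => ⟨h321, h3412, hσ⟩⟩
  · intro τ
    rw [hpos, insertAt_apply_succAbove, Fin.succAbove_eq_zero_iff one_ne_zero]

lemma avoidCount_add_two_add (m : ℕ) :
    avoidCount (m+2) + avoidCount m = 3 * avoidCount (m+1) := by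
  have hb1 : b (m+2) 1 = avoidCount (m+1) := b_succ_of_le_one (k := 0) (by omega) (by omega)
  have hb2 : b (m+2) 2 = avoidCount (m+1) := b_succ_of_le_one (k := 1) (by omega) (by omega)
  have hb1' : b (m+1) 1 = avoidCount m := b_succ_of_le_one (k := 0) (by omega) (by omega)
  have hshift : ∑ k ∈ range m, b (m+2) (k+3) = ∑ k ∈ range m, b (m+1) (k+2) :=
    sum_congr rfl fun k hk => b_add_three (mem_range.1 hk)
  have hsum₂ := avoidCount_eq_sum_b (m+1)
  have hsum₁ := avoidCount_eq_sum_b m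
  simp only [sum_range_succ', zero_add, add_assoc, Nat.reduceAdd] at hsum₂ hsum₁ hshift
  omega

lemma fib_add_four_add (j : ℕ) : Nat.fib (j+4) + Nat.fib j = 3 * Nat.fib (j+2) := by
  simp only [Nat.fib_add_two]
  omega

lemma avoidCount_succ_eq_fib (m : ℕ) : avoidCount (m+1) = Nat.fib (2*m+1) := by
  induction m using Nat.twoStepInduction with
  | zero => simpa using avoidCount_one
  | one =>
    have h : avoidCount 2 + avoidCount 0 = 3 * avoidCount 1 := avoidCount_add_two_add 0
    rw [avoidCount_zero, avoidCount_one] at h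
    show avoidCount 2 = Nat.fib 3
    rw [show Nat.fib 3 = 2 from rfl]
    omega
  | more m ih₀ ih₁ =>
    have h : avoidCount (m+3) + avoidCount (m+1) = 3 * avoidCount (m+2) :=
      avoidCount_add_two_add (m+1)
    have hfib : Nat.fib (2*m+5) + Nat.fib (2*m+1) = 3 * Nat.fib (2*m+3) :=
      fib_add_four_add (2*m+1)
    have ih₁ : avoidCount (m+2) = Nat.fib (2*m+3) := ih₁
    show avoidCount (m+3) = Nat.fib (2*m+5)
    omega

end AvoidingPerm

open AvoidingPerm in
theorem stmt_11 :
    (∀ n : ℕ, 1 < n → b n 1 = Nat.fib (2 * n - 3) ∧ b n 2 = Nat.fib (2 * n - 3)) ∧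
    (∀ n k : ℕ, 3 ≤ k → k ≤ n → b n k = b (n - 1) (k - 1)) := by
  refine ⟨fun n hn => ?_, fun n k hk hkn => ?_⟩
  · obtain ⟨m, rfl⟩ : ∃ m, n = m + 2 := ⟨n - 2, by omega⟩
    rw [show 2 * (m + 2) - 3 = 2 * m + 1 by omega, ← avoidCount_succ_eq_fib]
    exact ⟨b_succ_of_le_one (k := 0) (by omega) (by omega),
      b_succ_of_le_one (k := 1) (by omega) (by omega)⟩
  · obtain ⟨m, rfl⟩ : ∃ m, n = m + 2 := ⟨n - 2, by omega⟩
    obtain ⟨j, rfl⟩ : ∃ j, k = j + 3 := ⟨k - 3, by omega⟩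
    exact b_add_three (by omega)
end

section
/- For every n ≥ 1, the number of set partitions of {1,...,n} that are simultaneously noncrossing and nonnesting equals the Fibonacci number F_{2n-1}. -/
/-- `i` and `j` lie in the same block of the set partition `P`. -/
def SameBlock {n : ℕ} (P : Finpartition (Finset.univ : Finset (Fin n)))
    (i j : Fin n) : Prop :=
  ∃ b ∈ P.parts, i ∈ b ∧ j ∈ b

/-- `(i, j)` is an arc of the arc diagram of `P`: `i < j` are in the same block
and no element strictly between them lies in that block. -/
def IsArc {n : ℕ} (P : Finpartition (Finset.univ : Finset (Fin n)))
    (i j : Fin n) : Prop :=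
  i < j ∧ SameBlock P i j ∧ ∀ m : Fin n, i < m → m < j → ¬ SameBlock P i m

/-- `P` is noncrossing: no two arcs `(i₁,j₁)`, `(i₂,j₂)` with `i₁<i₂<j₁<j₂`. -/
def Noncrossing {n : ℕ} (P : Finpartition (Finset.univ : Finset (Fin n))) : Prop :=
  ¬ ∃ i₁ j₁ i₂ j₂ : Fin n, IsArc P i₁ j₁ ∧ IsArc P i₂ j₂ ∧
      i₁ < i₂ ∧ i₂ < j₁ ∧ j₁ < j₂

/-- `P` is nonnesting: no two arcs `(i₁,j₁)`, `(i₂,j₂)` with `i₁<i₂<j₂<j₁`. -/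
def Nonnesting {n : ℕ} (P : Finpartition (Finset.univ : Finset (Fin n))) : Prop :=
  ¬ ∃ i₁ j₁ i₂ j₂ : Fin n, IsArc P i₁ j₁ ∧ IsArc P i₂ j₂ ∧
      i₁ < i₂ ∧ i₂ < j₂ ∧ j₂ < j₁

/-!
In a noncrossing nonnesting partition no arc starts or ends strictly inside another arc, so the
arcs are intervals that meet at most in an endpoint. Such a configuration is recorded faithfully
by one letter from `{0, 1, 2}` per gap `(k, k + 1)`, the only constraint being that `2` never
follows `0`. Splitting these words by their first letter, the counts `a m` (words after a `0`)
and `b m` (words after a nonzero letter) satisfy `a (m + 1) = a m + b m` and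
`b (m + 1) = a m + 2 b m`, which is the recursion of `F (2m + 1)` and `F (2m + 2)`.
-/

open Finset

def zeroExtend {α : Type*} [Zero α] {m : ℕ} (s : Fin m → α) : ℕ → α :=
  fun k => if h : k < m then s ⟨k, h⟩ else 0

section zeroExtend

variable {α : Type*} [Zero α] {m : ℕ}

@[simp]
lemma zeroExtend_val (s : Fin m → α) (k : Fin m) : zeroExtend s k = s k :=
  dif_pos k.2

lemma zeroExtend_of_le (s : Fin m → α) {k : ℕ} (hk : m ≤ k) : zeroExtend s k = 0 :=
  dif_neg hk.not_gt

@[simp]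
lemma zeroExtend_cons_zero (c : α) (t : Fin m → α) :
    zeroExtend (Fin.cons c t : Fin (m + 1) → α) 0 = c :=
  dif_pos m.succ_pos

@[simp]
lemma zeroExtend_cons_succ (c : α) (t : Fin m → α) (k : ℕ) :
    zeroExtend (Fin.cons c t : Fin (m + 1) → α) (k + 1) = zeroExtend t k := by
  by_cases hk : k < m
  · rw [zeroExtend, dif_pos (Nat.succ_lt_succ hk), zeroExtend, dif_pos hk]
    exact Fin.cons_succ (α := fun _ => α) c t ⟨k, hk⟩
  · rw [zeroExtend, dif_neg (by omega), zeroExtend, dif_neg hk]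

lemma zeroExtend_restrict {v : ℕ → α} (hv : ∀ k, m ≤ k → v k = 0) :
    zeroExtend (fun k : Fin m => v k) = v := by
  funext k
  by_cases hk : k < m
  · exact zeroExtend_val _ ⟨k, hk⟩
  · rw [zeroExtend_of_le _ (not_lt.1 hk), hv k (not_lt.1 hk)]

end zeroExtend

/-- The letter `2` never follows the letter `0`; `p` plays the role of the letter in front of
`v 0`. -/
def Admissible (p : Fin 3) (v : ℕ → Fin 3) : Prop :=
  (v 0 = 2 → p ≠ 0) ∧ ∀ k, v (k + 1) = 2 → v k ≠ 0

lemma admissible_cons_iff {m : ℕ} {p c : Fin 3} {t : Fin m → Fin 3} :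
    Admissible p (zeroExtend (Fin.cons c t : Fin (m + 1) → Fin 3)) ↔
      (c = 2 → p ≠ 0) ∧ Admissible c (zeroExtend t) := by
  rw [Admissible, Admissible, ← Nat.and_forall_add_one]
  simp only [zeroExtend_cons_zero, zeroExtend_cons_succ]

lemma admissible_congr {p q : Fin 3} (h : p = 0 ↔ q = 0) (v : ℕ → Fin 3) :
    Admissible p v ↔ Admissible q v := by
  simp only [Admissible, ne_eq, h]

lemma card_admissible_succ (m : ℕ) (p : Fin 3) :
    Nat.card {s : Fin (m + 1) → Fin 3 // Admissible p (zeroExtend s)} =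
      Nat.card {t : Fin m → Fin 3 // Admissible 0 (zeroExtend t)} +
      Nat.card {t : Fin m → Fin 3 // Admissible 1 (zeroExtend t)} +
      if p = 0 then 0 else Nat.card {t : Fin m → Fin 3 // Admissible 1 (zeroExtend t)} := by
  let e : {s : Fin (m + 1) → Fin 3 // Admissible p (zeroExtend s)} ≃
      Σ c : Fin 3, {t : Fin m → Fin 3 // (c = 2 → p ≠ 0) ∧ Admissible c (zeroExtend t)} :=
    ((Fin.consEquiv fun _ => Fin 3).subtypeEquiv fun _ => admissible_cons_iff.symm).symm.trans
      (Equiv.subtypeProdEquivSigmaSubtype fun c t => (c = 2 → p ≠ 0) ∧ Admissible c (zeroExtend t))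
  rw [Nat.card_congr e, Nat.card_sigma, Fin.sum_univ_three]
  split_ifs with hp
  · simp [hp]
  · simp [hp, admissible_congr (p := 2) (q := 1) (by decide)]

lemma card_admissible (m : ℕ) :
    Nat.card {s : Fin m → Fin 3 // Admissible 0 (zeroExtend s)} = Nat.fib (2 * m + 1) ∧
      Nat.card {s : Fin m → Fin 3 // Admissible 1 (zeroExtend s)} = Nat.fib (2 * m + 2) := by
  induction m with
  | zero => simp [Admissible, zeroExtend]
  | succ m ih =>
    rw [card_admissible_succ, card_admissible_succ, ih.1, ih.2]
    have h3 : Nat.fib (2 * m + 3) = Nat.fib (2 * m + 1) + Nat.fib (2 * m + 2) := Nat.fib_add_two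
    have h4 : Nat.fib (2 * m + 4) = Nat.fib (2 * m + 2) + Nat.fib (2 * m + 3) := Nat.fib_add_two
    refine ⟨by simp [show 2 * (m + 1) + 1 = 2 * m + 3 by ring, h3], ?_⟩
    simp only [one_ne_zero, if_false, show 2 * (m + 1) + 2 = 2 * m + 4 by ring, h4, h3]
    ring

section Partition

variable {n : ℕ} {P Q : Finpartition (univ : Finset (Fin n))} {i j : Fin n}

lemma sameBlock_iff_mem_part : SameBlock P i j ↔ j ∈ P.part i := by
  rw [Finpartition.mem_part_iff_exists]
  exact exists_congr fun _ => and_congr_right fun _ => and_comm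

lemma SameBlock.refl (P : Finpartition (univ : Finset (Fin n))) (i : Fin n) : SameBlock P i i :=
  sameBlock_iff_mem_part.2 (P.mem_part (mem_univ i))

lemma SameBlock.symm (h : SameBlock P i j) : SameBlock P j i := by
  obtain ⟨b, hb, hi, hj⟩ := h
  exact ⟨b, hb, hj, hi⟩

lemma SameBlock.trans {k : Fin n} (h₁ : SameBlock P i j) (h₂ : SameBlock P j k) :
    SameBlock P i k := by
  obtain ⟨b, hb, hi, hj⟩ := h₁
  obtain ⟨c, hc, hj', hk⟩ := h₂
  obtain rfl := P.eq_of_mem_parts hb hc hj hj'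
  exact ⟨b, hb, hi, hk⟩

lemma Finpartition.mem_parts_iff_exists_part_eq {α : Type*} [DecidableEq α] {s t : Finset α}
    (P : Finpartition s) : t ∈ P.parts ↔ ∃ a ∈ s, P.part a = t :=
  ⟨fun ht => P.part_surjOn ht, fun ⟨_, ha, hat⟩ => hat ▸ P.part_mem.2 ha⟩

lemma eq_of_sameBlock_iff (h : ∀ i j, SameBlock P i j ↔ SameBlock Q i j) : P = Q := by
  have hpart (i : Fin n) : P.part i = Q.part i := by
    ext j
    rw [← sameBlock_iff_mem_part, ← sameBlock_iff_mem_part, h]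
  ext t
  simp only [Finpartition.mem_parts_iff_exists_part_eq, hpart]

lemma IsArc.right_unique {j' : Fin n} (h : IsArc P i j) (h' : IsArc P i j') : j = j' := by
  by_contra hne
  rcases lt_or_gt_of_ne hne with hlt | hlt
  · exact h'.2.2 j h.1 hlt h.2.1
  · exact h.2.2 j' h'.1 hlt h'.2.1

lemma IsArc.left_unique {i' : Fin n} (h : IsArc P i j) (h' : IsArc P i' j) : i = i' := by
  by_contra hne
  rcases lt_or_gt_of_ne hne with hlt | hlt
  · exact h.2.2 i' hlt h'.1 (h.2.1.trans h'.2.1.symm)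
  · exact h'.2.2 i hlt h.1 (h'.2.1.trans h.2.1.symm)

lemma SameBlock.exists_isArc_right (h : SameBlock P i j) (hij : i < j) :
    ∃ m, IsArc P i m ∧ m ≤ j := by
  classical
  obtain ⟨m, hm, hmin⟩ := ({x | i < x ∧ SameBlock P i x} : Finset (Fin n)).exists_min_image id
    ⟨j, by simp [hij, h]⟩
  simp only [mem_filter, mem_univ, true_and, id] at hm hmin
  exact ⟨m, ⟨hm.1, hm.2, fun x hix hxm hx => (hmin x ⟨hix, hx⟩).not_gt hxm⟩, hmin j ⟨hij, h⟩⟩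

lemma SameBlock.apply_eq {β : Type*} {f : Fin n → β} (hf : ∀ ⦃a b⦄, IsArc P a b → f a = f b)
    (h : SameBlock P i j) : f i = f j := by
  suffices key : ∀ i j, i ≤ j → SameBlock P i j → f i = f j by
    rcases le_total i j with hij | hji
    · exact key i j hij h
    · exact (key j i hji h.symm).symm
  intro i j
  induction i using WellFoundedGT.induction with
  | _ i ih =>
    intro hij h
    rcases hij.lt_or_eq with hij | rfl
    · obtain ⟨m, hm, hmj⟩ := h.exists_isArc_right hij
      exact (hf hm).trans (ih m hm.1 hmj (hm.2.1.symm.trans h))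
    · rfl

def ArcsNonoverlapping (P : Finpartition (univ : Finset (Fin n))) : Prop :=
  ∀ ⦃a b c d : Fin n⦄, IsArc P a b → IsArc P c d → a < c → b ≤ c

lemma noncrossing_and_nonnesting_iff : Noncrossing P ∧ Nonnesting P ↔ ArcsNonoverlapping P := by
  constructor
  · rintro ⟨hNC, hNN⟩ a b c d hab hcd hac
    by_contra! hcb
    rcases lt_trichotomy d b with hdb | rfl | hbd
    · exact hNN ⟨a, b, c, d, hab, hcd, hac, hcd.1, hdb⟩
    · exact hac.ne (hab.left_unique hcd)
    · exact hNC ⟨a, b, c, d, hab, hcd, hac, hcb, hbd⟩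
  · intro hP
    refine ⟨?_, ?_⟩ <;> rintro ⟨a, b, c, d, hab, hcd, hac, h₁, h₂⟩
    · exact (hP hab hcd hac).not_gt h₁
    · exact (hP hab hcd hac).not_gt (hcd.1.trans h₂)

namespace ArcsNonoverlapping

variable (hP : ArcsNonoverlapping P) {a b c d : Fin n}
include hP

lemma not_isArc_start_mem (hab : IsArc P a b) (hac : a < c) (hcb : c < b) : ¬ IsArc P c d :=
  fun hcd => (hP hab hcd hac).not_gt hcb

lemma not_isArc_end_mem (hab : IsArc P a b) (hac : a < c) (hcb : c < b) : ¬ IsArc P d c := by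
  intro hdc
  rcases lt_trichotomy d a with hda | rfl | had
  · exact (hP hdc hab hda).not_gt hac
  · exact hcb.ne (hdc.right_unique hab)
  · exact (hP hab hdc had).not_gt (hdc.1.trans hcb)

end ArcsNonoverlapping

end Partition

lemma Nat.count_eq_count_iff {p : ℕ → Prop} [DecidablePred p] {a b : ℕ} (hab : a ≤ b) :
    Nat.count p a = Nat.count p b ↔ ∀ x, a ≤ x → x < b → ¬ p x := by
  constructor
  · intro h x hax hxb hx
    exact (Nat.count_monotone p hax).not_gt (h ▸ Nat.count_strict_mono hx hxb)
  · intro h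
    by_contra hne
    obtain ⟨x, ⟨hax, hxb⟩, hx⟩ :=
      Nat.exists_of_count_lt_count ((Nat.count_monotone p hab).lt_of_ne hne)
    exact h x hax hxb hx

section Word

variable {v : ℕ → Fin 3} {i j k m : ℕ}

/-- Points carrying the letter `2` are singletons; the others are grouped by the number of
letters `0` to their left. -/
def blockKey (v : ℕ → Fin 3) (k : ℕ) : ℕ × ℕ :=
  (if v k = 2 then k + 1 else 0, Nat.count (fun x => v x = 0) k)

lemma blockKey_eq_iff (hij : i < j) :
    blockKey v i = blockKey v j ↔ v i = 1 ∧ v j ≠ 2 ∧ ∀ k, i < k → k < j → v k ≠ 0 := by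
  have hsingleton : (if v i = 2 then i + 1 else 0) = (if v j = 2 then j + 1 else 0) ↔
      v i ≠ 2 ∧ v j ≠ 2 := by
    split_ifs <;> grind
  have hzero : (∀ x, i ≤ x → x < j → ¬ v x = 0) ↔
      v i ≠ 0 ∧ ∀ k, i < k → k < j → v k ≠ 0 :=
    ⟨fun h => ⟨h i le_rfl hij, fun k hik hkj => h k hik.le hkj⟩,
      fun h x hix hxj => hix.lt_or_eq.elim (h.2 x · hxj) (· ▸ h.1)⟩
  have hone : v i = 1 ↔ v i ≠ 2 ∧ v i ≠ 0 := by
    generalize v i = x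
    decide +revert
  simp only [blockKey, Prod.mk.injEq, Nat.count_eq_count_iff hij.le, hsingleton, hzero, hone]
  tauto

lemma exists_next_ne_two (hz : ∀ k, m ≤ k → v k = 0) (hk : k < m) :
    ∃ b, k < b ∧ b ≤ m ∧ v b ≠ 2 ∧ ∀ x, k < x → x < b → v x = 2 := by
  classical
  have hex : ∃ b, k < b ∧ v b ≠ 2 := ⟨m, hk, by simp [hz m le_rfl]⟩
  refine ⟨Nat.find hex, (Nat.find_spec hex).1, Nat.find_min' hex ⟨hk, by simp [hz m le_rfl]⟩,
    (Nat.find_spec hex).2, fun x hkx hxb => ?_⟩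
  by_contra hx
  exact Nat.find_min hex hxb ⟨hkx, hx⟩

lemma Admissible.exists_prev_eq_one (hv : Admissible 0 v) (hk : v k = 2) :
    ∃ a < k, v a = 1 ∧ ∀ x, a < x → x ≤ k → v x = 2 := by
  classical
  obtain ⟨a, ha_def⟩ : ∃ a, Nat.findGreatest (fun a => v a ≠ 2) k = a := ⟨_, rfl⟩
  have ha : v a ≠ 2 := ha_def ▸
    Nat.findGreatest_spec (P := fun a => v a ≠ 2) k.zero_le fun h => hv.1 h rfl
  have hak : a < k := (ha_def ▸ Nat.findGreatest_le k).lt_of_ne fun h => ha (h ▸ hk)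
  have hrun : ∀ x, a < x → x ≤ k → v x = 2 := fun x hax hxk => by
    by_contra hx
    exact Nat.findGreatest_is_greatest (ha_def ▸ hax) hxk hx
  have ha0 : v a ≠ 0 := hv.2 a (hrun (a + 1) a.lt_succ_self hak)
  refine ⟨a, hak, ?_, hrun⟩
  revert ha ha0
  generalize v a = x
  decide +revert

def IsWordArc (v : ℕ → Fin 3) (i j : ℕ) : Prop :=
  i < j ∧ v i = 1 ∧ v j ≠ 2 ∧ ∀ k, i < k → k < j → v k = 2

end Word

section Codec

variable {n : ℕ} {P : Finpartition (univ : Finset (Fin n))} {v : ℕ → Fin 3} {i j a b : Fin n}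
  {k : ℕ}

open Classical in
/-- Letter `k` describes the gap between `k` and `k + 1`; it is `0` exactly when no arc passes
over that gap. -/
noncomputable def gapWord (P : Finpartition (univ : Finset (Fin n))) (k : ℕ) : Fin 3 :=
  if ∃ a b : Fin n, IsArc P a b ∧ a < k ∧ k < b then 2
  else if ∃ a b : Fin n, IsArc P a b ∧ a = k then 1 else 0

lemma gapWord_eq_two_iff : gapWord P k = 2 ↔ ∃ a b : Fin n, IsArc P a b ∧ a < k ∧ k < b := by
  unfold gapWord
  split_ifs with hin
  · exact iff_of_true rfl hin
  all_goals exact iff_of_false (by decide) hin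

lemma gapWord_eq_one_iff (hP : ArcsNonoverlapping P) :
    gapWord P k = 1 ↔ ∃ a b : Fin n, IsArc P a b ∧ a = k := by
  unfold gapWord
  split_ifs with hin hstart
  · obtain ⟨a, b, hab, hak, hkb⟩ := hin
    simp only [Fin.reduceEq, false_iff, not_exists, not_and]
    rintro c d hcd rfl
    exact hP.not_isArc_start_mem hab hak hkb hcd
  · simpa using hstart
  · simpa using hstart

lemma gapWord_ne_zero (hab : IsArc P a b) (hak : a ≤ k) (hkb : k < b) : gapWord P k ≠ 0 := by
  unfold gapWord
  split_ifs with hin hstart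
  · decide
  · decide
  · rcases hak.lt_or_eq with hak | rfl
    · exact absurd ⟨a, b, hab, hak, hkb⟩ hin
    · exact absurd ⟨a, b, hab, rfl⟩ hstart

lemma gapWord_of_le (hk : n - 1 ≤ k) : gapWord P k = 0 := by
  unfold gapWord
  rw [if_neg, if_neg]
  · rintro ⟨a, b, hab, rfl⟩
    have : (a : ℕ) < b := hab.1
    omega
  · rintro ⟨a, b, -, -, hkb⟩
    omega

lemma admissible_gapWord : Admissible 0 (gapWord P) := by
  refine ⟨fun h => ?_, fun k h => ?_⟩
  · obtain ⟨a, b, -, ha, -⟩ := gapWord_eq_two_iff.1 h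
    exact absurd ha (Nat.not_lt_zero _)
  · obtain ⟨a, b, hab, hak, hkb⟩ := gapWord_eq_two_iff.1 h
    exact gapWord_ne_zero hab (Nat.le_of_lt_succ hak) (by omega)

lemma IsArc.blockKey_gapWord_eq (hP : ArcsNonoverlapping P) (hij : IsArc P i j) :
    blockKey (gapWord P) i = blockKey (gapWord P) j := by
  refine (blockKey_eq_iff hij.1).2 ⟨(gapWord_eq_one_iff hP).2 ⟨i, j, hij, rfl⟩, fun h => ?_,
    fun k hik hkj => gapWord_ne_zero hij hik.le hkj⟩
  obtain ⟨a, b, hab, haj, hjb⟩ := gapWord_eq_two_iff.1 h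
  exact hP.not_isArc_end_mem hab haj hjb hij

lemma sameBlock_iff_blockKey_gapWord_eq (hP : ArcsNonoverlapping P) :
    SameBlock P i j ↔ blockKey (gapWord P) i = blockKey (gapWord P) j := by
  refine ⟨SameBlock.apply_eq fun a b hab => hab.blockKey_gapWord_eq hP, fun h => ?_⟩
  suffices key : ∀ i j : Fin n, i ≤ j →
      blockKey (gapWord P) i = blockKey (gapWord P) j → SameBlock P i j by
    rcases le_total i j with hij | hji
    · exact key i j hij h
    · exact (key j i hji h.symm).symm
  intro i j
  induction i using WellFoundedGT.induction with
  | _ i ih =>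
    intro hij h
    rcases hij.lt_or_eq with hij | rfl
    · obtain ⟨hi, hj, -⟩ := (blockKey_eq_iff hij).1 h
      obtain ⟨a, m, him, hai⟩ := (gapWord_eq_one_iff hP).1 hi
      obtain rfl := Fin.ext hai
      have hmj : m ≤ j := not_lt.1 fun hjm => hj (gapWord_eq_two_iff.2 ⟨a, m, him, hij, hjm⟩)
      exact him.2.1.trans (ih m him.1 hmj ((him.blockKey_gapWord_eq hP).symm.trans h))
    · exact SameBlock.refl P i

open Classical in
noncomputable def ofWord (v : ℕ → Fin 3) : Finpartition (univ : Finset (Fin n)) :=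
  Finpartition.ofSetoid (Setoid.ker fun i : Fin n => blockKey v i)

lemma sameBlock_ofWord_iff :
    SameBlock (ofWord (n := n) v) i j ↔ blockKey v i = blockKey v j := by
  classical
  rw [sameBlock_iff_mem_part, ofWord]
  exact Finpartition.mem_part_ofSetoid_iff_rel

lemma isArc_ofWord_iff : IsArc (ofWord v) i j ↔ IsWordArc v i j := by
  simp only [IsArc, sameBlock_ofWord_iff]
  constructor
  · rintro ⟨hij, hkey, hmid⟩
    obtain ⟨hi, hj, hne⟩ := (blockKey_eq_iff hij).1 hkey
    refine ⟨hij, hi, hj, fun k hik hkj => ?_⟩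
    by_contra hk
    exact hmid ⟨k, hkj.trans j.2⟩ hik hkj
      ((blockKey_eq_iff hik).2 ⟨hi, hk, fun x hix hxk => hne x hix (hxk.trans hkj)⟩)
  · rintro ⟨hij, hi, hj, hmid⟩
    refine ⟨hij, (blockKey_eq_iff hij).2 ⟨hi, hj, fun k hik hkj => ?_⟩, fun m him hmj h => ?_⟩
    · simp [hmid k hik hkj]
    · exact ((blockKey_eq_iff him).1 h).2.1 (hmid m him hmj)

lemma arcsNonoverlapping_ofWord : ArcsNonoverlapping (ofWord (n := n) v) := by
  intro a b c d hab hcd hac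
  rw [isArc_ofWord_iff] at hab hcd
  by_contra! hcb
  have := hab.2.2.2 c hac hcb
  simp [hcd.2.1] at this

lemma gapWord_ofWord (hv : Admissible 0 v) (hz : ∀ k, n - 1 ≤ k → v k = 0) (k : ℕ) :
    gapWord (ofWord (n := n) v) k = v k := by
  have hlt (h : v k ≠ 0) : k < n - 1 := not_le.1 fun hk => h (hz k hk)
  have htwo : gapWord (ofWord (n := n) v) k = 2 ↔ v k = 2 := by
    simp only [gapWord_eq_two_iff, isArc_ofWord_iff]
    constructor
    · rintro ⟨a, b, hab, hak, hkb⟩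
      exact hab.2.2.2 k hak hkb
    · intro hk
      obtain ⟨a, hak, ha, hleft⟩ := hv.exists_prev_eq_one hk
      obtain ⟨b, hkb, hbn, hb, hright⟩ := exists_next_ne_two hz (hlt (by simp [hk]))
      refine ⟨⟨a, by omega⟩, ⟨b, by omega⟩, ⟨by simp; omega, ha, hb, fun x hax hxb => ?_⟩, hak, hkb⟩
      rcases le_or_gt x k with hxk | hkx
      · exact hleft x hax hxk
      · exact hright x hkx hxb
  have hone : gapWord (ofWord (n := n) v) k = 1 ↔ v k = 1 := by
    simp only [gapWord_eq_one_iff arcsNonoverlapping_ofWord, isArc_ofWord_iff]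
    constructor
    · rintro ⟨a, b, hab, rfl⟩
      exact hab.2.1
    · intro hk
      have hkn := hlt (by simp [hk])
      obtain ⟨b, hkb, hbn, hb, hright⟩ := exists_next_ne_two hz hkn
      exact ⟨⟨k, by omega⟩, ⟨b, by omega⟩, ⟨hkb, hk, hb, hright⟩, rfl⟩
  revert htwo hone
  generalize gapWord (ofWord (n := n) v) k = x
  generalize v k = y
  decide +revert

lemma ofWord_gapWord (hP : ArcsNonoverlapping P) : ofWord (gapWord P) = P :=
  eq_of_sameBlock_iff fun _ _ => by
    rw [sameBlock_ofWord_iff, sameBlock_iff_blockKey_gapWord_eq hP]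

end Codec

lemma zeroExtend_gapWord {n : ℕ} (P : Finpartition (univ : Finset (Fin n))) :
    zeroExtend (fun k : Fin (n - 1) => gapWord P k) = gapWord P :=
  zeroExtend_restrict fun _ => gapWord_of_le

noncomputable def arcsNonoverlappingEquivAdmissible (n : ℕ) :
    {P : Finpartition (univ : Finset (Fin n)) // ArcsNonoverlapping P} ≃
      {s : Fin (n - 1) → Fin 3 // Admissible 0 (zeroExtend s)} where
  toFun P := ⟨fun k => gapWord P.1 k, (zeroExtend_gapWord P.1).symm ▸ admissible_gapWord⟩
  invFun s := ⟨ofWord (zeroExtend s.1), arcsNonoverlapping_ofWord⟩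
  left_inv P := Subtype.ext <| (congrArg ofWord (zeroExtend_gapWord P.1)).trans (ofWord_gapWord P.2)
  right_inv s := Subtype.ext <| funext fun k => by
    simp only [gapWord_ofWord s.2 (fun k => zeroExtend_of_le s.1), zeroExtend_val]

theorem stmt_13 (n : ℕ) (hn : 1 ≤ n) :
    Nat.card {P : Finpartition (Finset.univ : Finset (Fin n)) //
        Noncrossing P ∧ Nonnesting P} = Nat.fib (2 * n - 1) := by
  rw [Nat.card_congr ((Equiv.subtypeEquivRight fun P => noncrossing_and_nonnesting_iff).trans
    (arcsNonoverlappingEquivAdmissible n)), (card_admissible (n - 1)).1]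
  congr 1
  omega
end

section
/- If σ is a permutation of {1,...,n} avoiding 231 and 3124 with 1 < σ(1) < n, then σ(2) = σ(1) - 1. -/
/-- `σ` avoids the pattern 231: no indices `i < j < k` with `σ k < σ i < σ j`. -/
def Avoids231 {n : ℕ} (σ : Equiv.Perm (Fin n)) : Prop :=
  ¬ ∃ i j k : Fin n, i < j ∧ j < k ∧ σ k < σ i ∧ σ i < σ j

/-- `σ` avoids the pattern 3124: no indices `i < j < k < l` with
`σ j < σ k < σ i < σ l`. -/
def Avoids3124 {n : ℕ} (σ : Equiv.Perm (Fin n)) : Prop :=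
  ¬ ∃ i j k l : Fin n, i < j ∧ j < k ∧ k < l ∧ σ j < σ k ∧ σ k < σ i ∧ σ i < σ l

/-!
Let `a` be the first value. Since `a` comes first, avoiding 231 forbids a value above `a` from
preceding a value below `a`; hence `a - 1` occurs before `a + 1`, and if the second value is
not `a - 1` it lies below `a - 1`. The first two positions together with the positions of `a - 1`
and `a + 1` then form a 3124.
-/

section

variable {n : ℕ} {σ : Equiv.Perm (Fin n)} {i j k p q : Fin n}

theorem Avoids231.apply_lt (h : Avoids231 σ) (hij : i < j) (hjk : j < k) (hki : σ k < σ i) :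
    σ j < σ i :=
  (lt_or_gt_of_ne (σ.injective.ne (ne_of_gt hij))).resolve_right
    fun hij' => h ⟨i, j, k, hij, hjk, hki, hij'⟩

theorem Avoids231.lt_of_apply_lt_of_apply_lt (h : Avoids231 σ) (hiq : i < q)
    (hp : σ p < σ i) (hq : σ i < σ q) : p < q :=
  (lt_or_gt_of_ne fun hpq => (hp.trans hq).ne (congrArg σ hpq)).resolve_right
    fun hqp => (h.apply_lt hiq hqp hp).not_gt hq

theorem Avoids3124.le_of_covBy_apply (h2 : Avoids3124 σ) (h1 : Avoids231 σ) (hij : i < j)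
    (hiq : i < q) (hp : σ p ⋖ σ i) (hq : σ i < σ q) : p ≤ j := by
  refine le_of_not_gt fun hjp => h2 ⟨i, j, p, q, hij, hjp, ?_, ?_, hp.lt, hq⟩
  · exact h1.lt_of_apply_lt_of_apply_lt hiq hp.lt hq
  · exact (hp.le_of_lt (h1.apply_lt hij hjp hp.lt)).lt_of_ne (σ.injective.ne hjp.ne)

end

/-- If a (231,3124)-avoiding permutation `σ` of `[n]` has first value strictly
between `1` and `n`, then its second value is the first value minus one
(0-indexed: `0 < σ 0 < n - 1` implies `σ 1 = σ 0 - 1`). -/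
theorem stmt_17 (n : ℕ) (hn : 2 ≤ n) (σ : Equiv.Perm (Fin n))
    (h1 : Avoids231 σ) (h2 : Avoids3124 σ)
    (hlo : 0 < (σ ⟨0, by omega⟩ : ℕ)) (hhi : (σ ⟨0, by omega⟩ : ℕ) < n - 1) :
    (σ ⟨1, by omega⟩ : ℕ) = (σ ⟨0, by omega⟩ : ℕ) - 1 := by
  set a : ℕ := (σ ⟨0, by omega⟩ : ℕ)
  set p := σ.symm ⟨a - 1, by omega⟩
  set q := σ.symm ⟨a + 1, by omega⟩
  have hσp : (σ p : ℕ) = a - 1 := by simp [p]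
  have hσq : (σ q : ℕ) = a + 1 := by simp [q]
  have hp0 : 0 < (p : ℕ) := Nat.pos_of_ne_zero fun h => by
    rw [show p = ⟨0, by omega⟩ from Fin.ext h] at hσp; omega
  have hq0 : 0 < (q : ℕ) := Nat.pos_of_ne_zero fun h => by
    rw [show q = ⟨0, by omega⟩ from Fin.ext h] at hσq; omega
  have hcov : σ p ⋖ σ ⟨0, by omega⟩ :=
    ⟨Fin.lt_def.2 (by omega), fun c hc hc' => by rw [Fin.lt_def] at hc hc'; omega⟩
  have hp1 : (p : ℕ) ≤ 1 := Fin.le_def.1 <| h2.le_of_covBy_apply (j := ⟨1, by omega⟩) h1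
    (Fin.lt_def.2 Nat.zero_lt_one) (Fin.lt_def.2 hq0) hcov (Fin.lt_def.2 (by omega))
  rw [show (⟨1, by omega⟩ : Fin n) = p from Fin.ext (by simp only; omega), hσp]
end
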